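/- arXiv:2405.10770 — 9 statements merged into one kernel-verified Lean document; each statement's English description precedes it below -/
import Mathlib

section
/- Let H be a complex Hilbert space and let T_1 ≥ T_2 ≥ ⋯ be a decreasing sequence of positive linear contractions on H such that T_n T_m = T_m T_n for all n, m ∈ ℕ. Let T be the strong operator limit of (T_n) and P the orthogonal projection onto {ξ ∈ H : Tξ = ξ}. Then S_n ξ → P ξ in norm for every ξ ∈ H, where S_n := T_n T_{n-1} ⋯ T_1. -/
/-!
Because the `T n` commute, the products `S n` are positive and `S (n + 1) = T (n + 1) S n ≤ S n`,
so `(S n)` is a decreasing sequence with `0 ≤ S n ≤ 1`. For `0 ≤ D ≤ 1` one has `D² ≤ D`, i.e.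
`‖D x‖² ≤ ⟪D x, x⟫`; applied to `D = S m - S n` this makes `S n x` Cauchy, since the reals
`⟪S n x, x⟫` decrease. A fixed vector `ζ` of `T` is fixed by each `T n`, because
`‖ζ‖² = ⟪T ζ, ζ⟫ ≤ ⟪T n ζ, ζ⟫` and `‖T n‖ ≤ 1`; hence by each `S n`. So `S n (P ξ) = P ξ`, while
the limit `v` of `S n (ξ - P ξ)` is fixed by `T`, so
`⟪v, v⟫ = lim ⟪S n (ξ - P ξ), v⟫ = lim ⟪ξ - P ξ, S n v⟫ = ⟪ξ - P ξ, v⟫ = 0`.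
-/

open Filter Topology
open scoped InnerProductSpace ComplexOrder

/-- `prodSeq T σ n = T (σ n) ∘ ⋯ ∘ T (σ 0)`. -/
noncomputable def prodSeq {H : Type*} [NormedAddCommGroup H] [InnerProductSpace ℂ H]
    (T : ℕ → H →L[ℂ] H) (σ : ℕ → ℕ) : ℕ → H →L[ℂ] H
  | 0 => T (σ 0)
  | (n + 1) => (T (σ (n + 1))).comp (prodSeq T σ n)

lemma Commute.mul_le_of_le_one {A : Type*} [CStarAlgebra A] [PartialOrder A] [StarOrderedRing A]
    {a b : A} (ha : a ≤ 1) (hb : 0 ≤ b) (h : Commute a b) : a * b ≤ b := by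
  have : 0 ≤ (1 - a) * b := ((Commute.one_left b).sub_left h).mul_nonneg (sub_nonneg.mpr ha) hb
  rwa [sub_mul, one_mul, sub_nonneg] at this

namespace ContinuousLinearMap

section Inner

variable {H : Type*} [NormedAddCommGroup H] [InnerProductSpace ℂ H]

lemma le_of_inner_le {A B : H →L[ℂ] H} (h : ∀ x, ⟪A x, x⟫_ℂ ≤ ⟪B x, x⟫_ℂ) : A ≤ B := by
  refine (isPositive_iff_complex _).mpr fun x => ?_
  have hx := RCLike.nonneg_iff.mp (sub_nonneg.mpr (h x))
  rw [sub_apply, inner_sub_left]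
  exact ⟨Complex.ext (by simp) (by simpa using hx.2.symm), hx.1⟩

lemma apply_eq_self_of_le_re_inner {A : H →L[ℂ] H} (hA : ‖A‖ ≤ 1) {x : H}
    (hx : ‖x‖ ^ 2 ≤ RCLike.re ⟪A x, x⟫_ℂ) : A x = x := by
  have hAx : ‖A x‖ ^ 2 ≤ ‖x‖ ^ 2 := by
    gcongr
    simpa using A.le_of_opNorm_le hA x
  have : ‖A x - x‖ ^ 2 ≤ 0 := by
    rw [@norm_sub_sq ℂ]
    linarith
  rw [← sub_eq_zero, ← norm_eq_zero, ← pow_eq_zero_iff two_ne_zero]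
  exact le_antisymm this (sq_nonneg _)

lemma apply_eq_self_of_antitone_of_tendsto {A : ℕ → H →L[ℂ] H} (hA : ∀ n, ‖A n‖ ≤ 1) {x : H}
    (hanti : Antitone fun n => RCLike.re ⟪A n x, x⟫_ℂ) (hlim : Tendsto (fun n => A n x) atTop (𝓝 x))
    (n : ℕ) : A n x = x := by
  refine apply_eq_self_of_le_re_inner (hA n) ?_
  have := hanti.le_of_tendsto
    ((RCLike.continuous_re.tendsto _).comp (hlim.inner tendsto_const_nhds)) n
  simpa only [Function.comp_def, inner_self_eq_norm_sq] using this

end Inner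

variable {H : Type*} [NormedAddCommGroup H] [InnerProductSpace ℂ H] [CompleteSpace H]

lemma norm_apply_sq_le_re_inner {D : H →L[ℂ] H} (hD₀ : 0 ≤ D) (hD₁ : D ≤ 1) (x : H) :
    ‖D x‖ ^ 2 ≤ RCLike.re ⟪D x, x⟫_ℂ := by
  have hsq := (le_def _ _).mp ((Commute.refl D).mul_le_of_le_one hD₁ hD₀) |>.re_inner_nonneg_left x
  rwa [sub_apply, mul_apply_eq_comp, inner_sub_left, map_sub, sub_nonneg,
    ((nonneg_iff_isPositive D).mp hD₀).inner_left_eq_inner_right, inner_self_eq_norm_sq] at hsq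

lemma dist_apply_sq_le_of_le {S₁ S₂ : H →L[ℂ] H} (h₀ : 0 ≤ S₂) (h : S₂ ≤ S₁) (h₁ : S₁ ≤ 1)
    (x : H) : dist (S₁ x) (S₂ x) ^ 2 ≤ RCLike.re ⟪S₁ x, x⟫_ℂ - RCLike.re ⟪S₂ x, x⟫_ℂ := by
  have := norm_apply_sq_le_re_inner (sub_nonneg.mpr h) ((sub_le_self _ h₀).trans h₁) x
  rwa [sub_apply, inner_sub_left, map_sub, ← dist_eq_norm] at this

lemma cauchySeq_apply_of_antitone {S : ℕ → H →L[ℂ] H} (hS : Antitone S) (hS₀ : ∀ n, 0 ≤ S n)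
    (hS₁ : ∀ n, S n ≤ 1) (x : H) : CauchySeq fun n => S n x := by
  set a := fun n => RCLike.re ⟪S n x, x⟫_ℂ
  have ha : Antitone a := fun m n hmn => by
    simpa [a, sub_apply, inner_sub_left] using ((le_def _ _).mp (hS hmn)).re_inner_nonneg_left x
  have hbdd : BddBelow (Set.range a) :=
    ⟨0, by rintro _ ⟨n, rfl⟩; exact ((nonneg_iff_isPositive _).mp (hS₀ n)).re_inner_nonneg_left x⟩
  have hdist : ∀ m n, dist (S m x) (S n x) ^ 2 ≤ dist (a m) (a n) := by
    intro m n
    rcases le_total m n with hmn | hnm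
    · exact (dist_apply_sq_le_of_le (hS₀ n) (hS hmn) (hS₁ m) x).trans (le_abs_self _)
    · rw [dist_comm, dist_comm (a m)]
      exact (dist_apply_sq_le_of_le (hS₀ m) (hS hnm) (hS₁ n) x).trans (le_abs_self _)
  have ha_cauchy : CauchySeq a := (tendsto_atTop_ciInf ha hbdd).cauchySeq
  refine Metric.cauchySeq_iff.mpr fun ε hε => ?_
  obtain ⟨N, hN⟩ := Metric.cauchySeq_iff.mp ha_cauchy (ε ^ 2) (by positivity)
  exact ⟨N, fun m hm n hn =>
    (pow_lt_pow_iff_left₀ dist_nonneg hε.le two_ne_zero).mp ((hdist m n).trans_lt (hN m hm n hn))⟩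

end ContinuousLinearMap

lemma tendsto_apply_apply_of_norm_le_one {𝕜 E F : Type*} [NontriviallyNormedField 𝕜]
    [NormedAddCommGroup E] [NormedSpace 𝕜 E] [NormedAddCommGroup F] [NormedSpace 𝕜 F]
    {ι : Type*} {l : Filter ι} {A : ι → E →L[𝕜] F} {B : E →L[𝕜] F} {x : ι → E} {v : E}
    (hA : ∀ i, ‖A i‖ ≤ 1) (hAB : ∀ y, Tendsto (fun i => A i y) l (𝓝 (B y)))
    (hx : Tendsto x l (𝓝 v)) : Tendsto (fun i => A i (x i)) l (𝓝 (B v)) := by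
  have hsmall : Tendsto (fun i => A i (x i - v)) l (𝓝 0) :=
    squeeze_zero_norm (fun i => (A i).le_of_opNorm_le (hA i) _ |>.trans_eq (one_mul _))
      (tendsto_iff_norm_sub_tendsto_zero.mp hx)
  simpa using hsmall.add (hAB v)

section prodSeq

variable {H : Type*} [NormedAddCommGroup H] [InnerProductSpace ℂ H]
  {T : ℕ → H →L[ℂ] H} {σ : ℕ → ℕ}

lemma prodSeq_succ (n : ℕ) : prodSeq T σ (n + 1) = T (σ (n + 1)) * prodSeq T σ n := rfl

lemma commute_prodSeq (hT : ∀ m n, Commute (T m) (T n)) (m n : ℕ) :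
    Commute (T m) (prodSeq T σ n) := by
  induction n with
  | zero => exact hT _ _
  | succ n ih => exact (hT _ _).mul_right ih

lemma prodSeq_apply_eq_self {x : H} (hx : ∀ n, T n x = x) (n : ℕ) : prodSeq T σ n x = x := by
  induction n with
  | zero => exact hx _
  | succ n ih => rw [prodSeq_succ, mul_apply_eq_comp, ih, hx]

variable [CompleteSpace H]

lemma prodSeq_nonneg (hT : ∀ m n, Commute (T m) (T n)) (hT₀ : ∀ n, 0 ≤ T n) (n : ℕ) :
    0 ≤ prodSeq T σ n := by
  induction n with
  | zero => exact hT₀ _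
  | succ n ih => exact (commute_prodSeq hT _ n).mul_nonneg (hT₀ _) ih

lemma prodSeq_antitone (hT : ∀ m n, Commute (T m) (T n)) (hT₀ : ∀ n, 0 ≤ T n)
    (hT₁ : ∀ n, T n ≤ 1) : Antitone (prodSeq T σ) :=
  antitone_nat_of_succ_le fun n =>
    (commute_prodSeq hT _ n).mul_le_of_le_one (hT₁ _) (prodSeq_nonneg hT hT₀ n)

lemma prodSeq_le_one (hT : ∀ m n, Commute (T m) (T n)) (hT₀ : ∀ n, 0 ≤ T n)
    (hT₁ : ∀ n, T n ≤ 1) (n : ℕ) : prodSeq T σ n ≤ 1 :=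
  (prodSeq_antitone hT hT₀ hT₁ n.zero_le).trans (hT₁ _)

end prodSeq

/-- The Paszkiewicz conjecture for a mutually commuting decreasing sequence of positive
contractions: `S n ξ → P ξ` for every `ξ`. -/
theorem paszkiewicz_commuting
    {H : Type*} [NormedAddCommGroup H] [InnerProductSpace ℂ H] [CompleteSpace H]
    (T : ℕ → H →L[ℂ] H)
    (hpos : ∀ n, ∀ ξ : H, 0 ≤ ⟪(T n) ξ, ξ⟫_ℂ)
    (hcontr : ∀ n, ‖T n‖ ≤ 1)
    (hdec : ∀ n, ∀ ξ : H, ⟪(T (n + 1)) ξ, ξ⟫_ℂ ≤ ⟪(T n) ξ, ξ⟫_ℂ)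
    (hcomm : ∀ n m, (T n).comp (T m) = (T m).comp (T n))
    (Tlim : H →L[ℂ] H)
    (hTlim : ∀ ξ : H, Tendsto (fun n => (T n) ξ) atTop (𝓝 (Tlim ξ)))
    (P : H →L[ℂ] H)
    (hPmem : ∀ ξ : H, Tlim (P ξ) = P ξ)
    (hPorth : ∀ ξ η : H, Tlim η = η → ⟪ξ - P ξ, η⟫_ℂ = 0) :
    ∀ ξ : H, Tendsto (fun n => prodSeq T id n ξ) atTop (𝓝 (P ξ)) := by
  have hT : ∀ m n, Commute (T m) (T n) := hcomm
  have hT₀ : ∀ n, 0 ≤ T n := fun n => ContinuousLinearMap.le_of_inner_le (by simpa using hpos n)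
  have hT₁ : ∀ n, T n ≤ 1 := fun n =>
    (CStarAlgebra.norm_le_one_iff_of_nonneg _ (hT₀ n)).mp (hcontr n)
  set S := prodSeq T id
  have hS_fix : ∀ ζ, Tlim ζ = ζ → ∀ n, S n ζ = ζ := fun ζ hζ =>
    prodSeq_apply_eq_self <| ContinuousLinearMap.apply_eq_self_of_antitone_of_tendsto hcontr
      (antitone_nat_of_succ_le fun n => (Complex.le_def.mp (hdec n ζ)).1)
      (by simpa only [hζ] using hTlim ζ)
  intro ξ
  set η := ξ - P ξ
  obtain ⟨v, hv⟩ := cauchySeq_tendsto_of_complete <|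
    ContinuousLinearMap.cauchySeq_apply_of_antitone (prodSeq_antitone (σ := id) hT hT₀ hT₁)
      (prodSeq_nonneg hT hT₀) (prodSeq_le_one hT hT₀ hT₁) η
  -- `S (n + 1) η` is definitionally `T (n + 1) (S n η)`
  have hv_fix : Tlim v = v := by
    have hshift := tendsto_add_atTop_nat 1
    exact tendsto_nhds_unique (tendsto_apply_apply_of_norm_le_one (fun n => hcontr (n + 1))
      (fun y => (hTlim y).comp hshift) hv) (hv.comp hshift)
  have hv_zero : v = 0 := by
    have horth : ∀ n, ⟪S n η, v⟫_ℂ = 0 := fun n => by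
      have hSn := (ContinuousLinearMap.nonneg_iff_isPositive (S n)).mp (prodSeq_nonneg hT hT₀ n)
      rw [hSn.inner_left_eq_inner_right, hS_fix v hv_fix, hPorth ξ v hv_fix]
    have hlim : Tendsto (fun n => ⟪S n η, v⟫_ℂ) atTop (𝓝 ⟪v, v⟫_ℂ) := hv.inner tendsto_const_nhds
    simp only [horth, tendsto_const_nhds_iff] at hlim
    exact inner_self_eq_zero.mp hlim.symm
  have hSξ : ∀ n, S n ξ = P ξ + S n η := fun n => by
    rw [map_sub, hS_fix _ (hPmem ξ), add_sub_cancel]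
  simpa [hSξ, hv_zero] using tendsto_const_nhds.add hv
end

section
/- There is an absolute constant C > 0 with the following property. Let ε ∈ [0, 1/2], θ ∈ [0, π/3], and in ℝ² let ξ = (1, 0) and η = (cos θ, sin θ). Let A := P_η + (1−ε) P_η^⊥, where P_η is the orthogonal projection onto the line spanned by η and P_η^⊥ = I − P_η. Set α := ‖A ξ‖ and let φ ∈ [0, π/3] be the angle with A ξ = α (cos φ, sin φ). Then α ≥ 1 − ε θ² and |φ − ε θ| ≤ C ε θ³. -/
open scoped InnerProductSpace
open Real

/-- The vector `(a, b)` in the Euclidean plane. -/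
noncomputable def vec2 (a b : ℝ) : EuclideanSpace ℝ (Fin 2) :=
  (WithLp.equiv 2 (Fin 2 → ℝ)).symm ![a, b]

/-!
Here `A ξ = (1 - ε sin² θ, ε sin θ cos θ)`, so `α = ‖A ξ‖` lies between `1 - ε sin² θ` and `1`.
On `[0, π/3]` the sine has slope at least `1/2`, so it suffices to compare
`sin φ = ε sin θ cos θ / α` with `sin (ε θ)`. Dividing by `α` costs a factor `1 - α ≤ ε θ²`, and
replacing `sin θ cos θ = sin (2θ) / 2` by `θ` and `sin (ε θ)` by `ε θ` costs `O(ε θ³)` each,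
by `|x - sin x| ≤ |x|³ / 6`.
-/

@[simp] lemma vec2_apply_zero (a b : ℝ) : vec2 a b 0 = a := rfl

@[simp] lemma vec2_apply_one (a b : ℝ) : vec2 a b 1 = b := rfl

lemma inner_vec2 (a b c d : ℝ) : ⟪vec2 a b, vec2 c d⟫_ℝ = a * c + b * d := by
  simp [vec2, PiLp.inner_apply, Fin.sum_univ_two]
  ring

lemma norm_vec2 (a b : ℝ) : ‖vec2 a b‖ = √(a ^ 2 + b ^ 2) := by
  simp [vec2, EuclideanSpace.norm_eq, Fin.sum_univ_two, sq_abs]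

lemma abs_le_norm_vec2 (a b : ℝ) : |a| ≤ ‖vec2 a b‖ := by
  simpa using PiLp.norm_apply_le (vec2 a b) 0

lemma perturbed_projection_vec2_one_zero (ε c s : ℝ) (h : c ^ 2 + s ^ 2 = 1) :
    ⟪vec2 c s, vec2 1 0⟫_ℝ • vec2 c s + (1 - ε) • (vec2 1 0 - ⟪vec2 c s, vec2 1 0⟫_ℝ • vec2 c s)
      = vec2 (1 - ε * s ^ 2) (ε * (s * c)) := by
  ext i
  fin_cases i
  · simp [inner_vec2]
    linear_combination ε * h
  · simp [inner_vec2]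
    ring

lemma norm_vec2_le_one {ε c s : ℝ} (hε₀ : 0 ≤ ε) (hε₂ : ε ≤ 2) (h : c ^ 2 + s ^ 2 = 1) :
    ‖vec2 (1 - ε * s ^ 2) (ε * (s * c))‖ ≤ 1 := by
  have hsq : (1 - ε * s ^ 2) ^ 2 + (ε * (s * c)) ^ 2 = 1 - ε * s ^ 2 * (2 - ε) := by
    linear_combination ε ^ 2 * s ^ 2 * h
  rw [norm_vec2, sqrt_le_one, hsq]
  nlinarith [mul_nonneg (mul_nonneg hε₀ (sq_nonneg s)) (sub_nonneg.2 hε₂)]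

lemma abs_sub_le_two_mul_abs_sin_sub_sin {x y : ℝ} (hx : x ∈ Set.Icc 0 (π / 3))
    (hy : y ∈ Set.Icc 0 (π / 3)) : |x - y| ≤ 2 * |sin x - sin y| := by
  have hslope : ∀ᵉ (a ∈ Set.Icc 0 (π / 3)) (b ∈ Set.Icc 0 (π / 3)), a ≤ b →
      1 / 2 * (b - a) ≤ sin b - sin a := by
    refine (convex_Icc _ _).mul_sub_le_image_sub_of_le_deriv continuousOn_sin
      differentiable_sin.differentiableOn fun t ht => ?_
    rw [interior_Icc] at ht
    rw [Real.deriv_sin, ← cos_pi_div_three]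
    exact cos_le_cos_of_nonneg_of_le_pi ht.1.le (by linarith [pi_pos]) ht.2.le
  rcases le_total x y with hxy | hxy
  · have := hslope x hx y hy hxy
    rw [abs_of_nonpos (by linarith), abs_of_nonpos (by linarith)]
    linarith
  · have := hslope y hy x hx hxy
    rw [abs_of_nonneg (by linarith), abs_of_nonneg (by linarith)]
    linarith

lemma abs_sub_sin_mul_cos_le (θ : ℝ) : |θ - sin θ * cos θ| ≤ 2 / 3 * |θ| ^ 3 := by
  have h := abs_sub_sin_le (2 * θ)
  rw [sin_two_mul, abs_mul, abs_two] at h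
  calc |θ - sin θ * cos θ| = |2 * θ - 2 * sin θ * cos θ| / 2 := by
        rw [← abs_two, ← abs_div, abs_two]; ring_nf
    _ ≤ 2 / 3 * |θ| ^ 3 := by linarith

lemma abs_sin_sub_le_of_mul_sin_eq {α b δ φ : ℝ} (hφ : 0 ≤ sin φ) (hα : 1 / 2 ≤ α)
    (hαδ : 1 - δ ≤ α) (hα₁ : α ≤ 1) (h : α * sin φ = b) : |sin φ - b| ≤ 2 * b * δ := by
  have hsin : sin φ ≤ 2 * b := by nlinarith
  rw [← h, show sin φ - α * sin φ = sin φ * (1 - α) by ring,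
    abs_of_nonneg (mul_nonneg hφ (by linarith)), h]
  exact mul_le_mul hsin (by linarith) (by linarith) (by linarith)

lemma abs_sub_mul_le_of_mul_sin_eq {ε θ α φ : ℝ} (hε : ε ∈ Set.Icc (0 : ℝ) (1 / 2))
    (hθ : θ ∈ Set.Icc 0 (π / 3)) (hφ : φ ∈ Set.Icc 0 (π / 3)) (hα : 1 / 2 ≤ α)
    (hα' : 1 - ε * θ ^ 2 ≤ α) (hα₁ : α ≤ 1) (h : α * sin φ = ε * (sin θ * cos θ)) :
    |φ - ε * θ| ≤ 6 * ε * θ ^ 3 := by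
  obtain ⟨hε₀, hε₁⟩ := hε
  obtain ⟨hθ₀, hθ₁⟩ := hθ
  have hpi := pi_gt_three
  have hεθ : ε * θ ∈ Set.Icc 0 (π / 3) := ⟨by positivity, by nlinarith⟩
  have hb : ε * (sin θ * cos θ) ≤ ε * θ := by
    have : sin θ * cos θ ≤ θ := by
      have hcos : 0 ≤ cos θ := cos_nonneg_of_mem_Icc ⟨by linarith, by linarith⟩
      nlinarith [sin_le hθ₀, cos_le_one θ]
    exact mul_le_mul_of_nonneg_left this hε₀
  have hscale : |sin φ - ε * (sin θ * cos θ)| ≤ ε * θ ^ 3 := by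
    have hsinφ : 0 ≤ sin φ := sin_nonneg_of_nonneg_of_le_pi hφ.1 (by linarith [hφ.2])
    refine (abs_sin_sub_le_of_mul_sin_eq hsinφ hα hα' hα₁ h).trans ?_
    calc 2 * (ε * (sin θ * cos θ)) * (ε * θ ^ 2) ≤ 2 * (ε * θ) * (ε * θ ^ 2) := by gcongr
      _ = 2 * ε * (ε * θ ^ 3) := by ring
      _ ≤ 1 * (ε * θ ^ 3) := by gcongr; linarith
      _ = ε * θ ^ 3 := one_mul _
  have hsincos : |ε * (sin θ * cos θ) - ε * θ| ≤ ε * θ ^ 3 := by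
    rw [← mul_sub, abs_mul, abs_sub_comm, abs_of_nonneg hε₀]
    have := abs_sub_sin_mul_cos_le θ
    rw [abs_of_nonneg hθ₀] at this
    nlinarith
  have hsin : |ε * θ - sin (ε * θ)| ≤ ε * θ ^ 3 := by
    refine (abs_sub_sin_le _).trans ?_
    rw [abs_of_nonneg hεθ.1]
    have : ε ^ 2 ≤ 1 := by nlinarith
    calc (ε * θ) ^ 3 / 6 = ε ^ 2 * (ε * θ ^ 3) / 6 := by ring
      _ ≤ 1 * (ε * θ ^ 3) / 6 := by gcongr
      _ ≤ ε * θ ^ 3 := by nlinarith [pow_nonneg hθ₀ 3]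
  calc |φ - ε * θ| ≤ 2 * |sin φ - sin (ε * θ)| := abs_sub_le_two_mul_abs_sin_sub_sin hφ hεθ
    _ ≤ 2 * (|sin φ - ε * (sin θ * cos θ)| + |ε * (sin θ * cos θ) - ε * θ|
          + |ε * θ - sin (ε * θ)|) := by
        gcongr
        linarith [abs_sub_le (sin φ) (ε * (sin θ * cos θ)) (sin (ε * θ)),
          abs_sub_le (ε * (sin θ * cos θ)) (ε * θ) (sin (ε * θ))]
    _ ≤ 6 * ε * θ ^ 3 := by linarith

/-- There is an absolute constant `C > 0` such that for `ε ∈ [0,1/2]`, `θ ∈ [0,π/3]`,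
`ξ = (1,0)`, `η = (cos θ, sin θ)` and `A = P_η + (1-ε) P_η^⊥`, one has `‖Aξ‖ ≥ 1 - ε θ²`,
and if `Aξ = ‖Aξ‖ (cos φ, sin φ)` with `φ ∈ [0, π/3]`, then `|φ - εθ| ≤ C ε θ³`. -/
theorem rank_one_perturbation_angle_estimate :
    ∃ C : ℝ, 0 < C ∧
      ∀ (ε θ : ℝ), ε ∈ Set.Icc (0 : ℝ) (1 / 2) → θ ∈ Set.Icc (0 : ℝ) (π / 3) →
      ∀ A : EuclideanSpace ℝ (Fin 2) →L[ℝ] EuclideanSpace ℝ (Fin 2),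
        (∀ x, A x = ⟪vec2 (cos θ) (sin θ), x⟫_ℝ • vec2 (cos θ) (sin θ)
            + (1 - ε) • (x - ⟪vec2 (cos θ) (sin θ), x⟫_ℝ • vec2 (cos θ) (sin θ))) →
        (1 - ε * θ ^ 2 ≤ ‖A (vec2 1 0)‖) ∧
        ∀ φ : ℝ, φ ∈ Set.Icc (0 : ℝ) (π / 3) →
          A (vec2 1 0) = ‖A (vec2 1 0)‖ • vec2 (cos φ) (sin φ) →
          |φ - ε * θ| ≤ C * ε * θ ^ 3 := by
  refine ⟨6, by norm_num, fun ε θ hε hθ A hA => ?_⟩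
  have hAξ : A (vec2 1 0) = vec2 (1 - ε * sin θ ^ 2) (ε * (sin θ * cos θ)) := by
    rw [hA]
    exact perturbed_projection_vec2_one_zero ε _ _ (cos_sq_add_sin_sq θ)
  have hα₀ : 1 - ε * sin θ ^ 2 ≤ ‖A (vec2 1 0)‖ :=
    hAξ ▸ (le_abs_self _).trans (abs_le_norm_vec2 _ _)
  have hα₁ : ‖A (vec2 1 0)‖ ≤ 1 :=
    hAξ ▸ norm_vec2_le_one hε.1 (by linarith [hε.2]) (cos_sq_add_sin_sq θ)
  have hα : 1 - ε * θ ^ 2 ≤ ‖A (vec2 1 0)‖ :=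
    hα₀.trans' (sub_le_sub_left (mul_le_mul_of_nonneg_left sin_sq_le_sq hε.1) 1)
  refine ⟨hα, fun φ hφ hAφ => abs_sub_mul_le_of_mul_sin_eq hε hθ hφ ?_ hα hα₁ ?_⟩
  · nlinarith [sin_sq_le_one θ, hε.2]
  · simpa [hAξ] using congrArg (· 1) hAφ.symm
end

section
/- Let H be a complex Hilbert space and let T_1 ≥ T_2 ≥ ⋯ be a decreasing sequence of positive linear contractions on H. Then there exists a sequence (x_n) of bounded linear operators on H with ‖x_n‖ ≤ 1 for all n such that T_n = y_n^* y_n for all n, where y_n := x_n x_{n-1} ⋯ x_1; moreover the double commutant of {T_1, T_2, …} equals the double commutant of {x_1, x_2, …}. -/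
/-!
Take `y n = √(T n)`. Since `T (n + 1) ≤ T n`, we have `‖y (n + 1) ξ‖ ≤ ‖y n ξ‖`, so by Douglas'
factorization `y (n + 1) = x (n + 1) * y n` for a contraction `x (n + 1)`, namely
`y n ξ ↦ y (n + 1) ξ` extended to the closure of the range of `y n` and by zero on its orthogonal
complement `ker (y n)`. This choice commutes with every operator commuting with `y n` and
`y (n + 1)`, so the `x n` have the same commutant as the `y n`, which is that of the `T n`.
-/

open scoped InnerProductSpace ComplexOrder

theorem Set.mem_centralizer_range_iff {M ι : Type*} [Mul M] {f : ι → M} {c : M} :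
    c ∈ Set.centralizer (Set.range f) ↔ ∀ i, Commute (f i) c := by
  simp [Set.mem_centralizer_iff, Commute, SemiconjBy]

theorem CFC.commute_sqrt_left {A : Type*} [CStarAlgebra A] [PartialOrder A] [StarOrderedRing A]
    {a c : A} (h : Commute a c) : Commute (CFC.sqrt a) c := by
  rw [CFC.sqrt_eq_cfc]
  exact h.cfc_nnreal _

namespace ContinuousLinearMap

section Douglas

variable {𝕜 E F G : Type*} [RCLike 𝕜]
  [NormedAddCommGroup E] [NormedSpace 𝕜 E]
  [NormedAddCommGroup F] [NormedSpace 𝕜 F] [CompleteSpace F]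
  [NormedAddCommGroup G] [InnerProductSpace 𝕜 G] [CompleteSpace G]

theorem exists_norm_le_one_comp_eq_of_norm_apply_le {A : E →L[𝕜] F} {B : E →L[𝕜] G}
    (hAB : ∀ ξ, ‖A ξ‖ ≤ ‖B ξ‖) :
    ∃ x : G →L[𝕜] F, ‖x‖ ≤ 1 ∧ x ∘L B = A ∧ B.rangeᗮ ≤ x.ker := by
  set K := B.range.topologicalClosure
  have : CompleteSpace K := B.range.isClosed_topologicalClosure.completeSpace_coe
  let e : E →ₗ[𝕜] K :=
    (B : E →ₗ[𝕜] G).codRestrict K fun ξ ↦ B.range.le_topologicalClosure ⟨ξ, rfl⟩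
  have he : DenseRange e := by
    rw [DenseRange, Subtype.dense_iff, ← Set.range_comp]
    exact B.range.topologicalClosure_coe.subset
  have hA : ∀ ξ, ‖A ξ‖ ≤ 1 * ‖e ξ‖ := fun ξ ↦ (one_mul ‖e ξ‖).symm ▸ hAB ξ
  refine ⟨(A : E →ₗ[𝕜] F).extendOfNorm e ∘L K.orthogonalProjectionOnto, ?_, ?_, ?_⟩
  · calc _ ≤ ‖(A : E →ₗ[𝕜] F).extendOfNorm e‖ * ‖K.orthogonalProjectionOnto‖ :=
          opNorm_comp_le _ _
      _ ≤ 1 * 1 := by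
        gcongr
        · exact LinearMap.opNorm_extendOfNorm_le he zero_le_one hA
        · exact K.orthogonalProjectionOnto_norm_le
      _ = 1 := one_mul 1
  · ext ξ
    have : K.orthogonalProjectionOnto (B ξ) = e ξ :=
      K.orthogonalProjectionOnto_mem_subspace_eq_self (e ξ)
    simp [this, LinearMap.extendOfNorm_eq he ⟨1, hA⟩]
  · intro v hv
    rw [← Submodule.orthogonal_closure] at hv
    simp [K.orthogonalProjectionOnto_apply_of_mem_orthogonal hv]

end Douglas

variable {𝕜 H : Type*} [RCLike 𝕜] [NormedAddCommGroup H] [InnerProductSpace 𝕜 H]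
  [CompleteSpace H]

/-- For normal `B`, `H = closure (range B) ⊕ ker B`; `x * c = c * x` holds on the first summand
because `x` intertwines `B` with `A`, and on the second because both sides vanish there. -/
theorem commute_of_mul_eq_of_orthogonal_range_le_ker {x A B c : H →L[𝕜] H} [IsStarNormal B]
    (hxB : x * B = A) (hx : B.rangeᗮ ≤ x.ker) (hA : Commute A c) (hB : Commute B c) :
    Commute x c := by
  set D := x * c - c * x
  have hDB : D * B = 0 := by
    rw [sub_mul, mul_assoc, mul_assoc, ← hB.eq, hxB, ← mul_assoc, hxB, ← hA.eq, sub_self]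
  have hrange : B.range.topologicalClosure ≤ D.ker := by
    refine Submodule.topologicalClosure_minimal _ ?_ D.isClosed_ker
    rintro _ ⟨ξ, rfl⟩
    exact congr($hDB ξ)
  have hker : B.rangeᗮ ≤ D.ker := by
    intro t ht
    have hct : c t ∈ B.rangeᗮ := by
      rw [IsStarNormal.orthogonal_range ‹_›] at ht ⊢
      have hBt : B t = 0 := ht
      simpa [hBt] using congr($hB.eq t)
    change x (c t) - c (x t) = 0
    rw [show x t = 0 from hx ht, show x (c t) = 0 from hx hct, map_zero, sub_zero]
  have : B.range.topologicalClosure.HasOrthogonalProjection := by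
    have := B.range.isClosed_topologicalClosure.completeSpace_coe
    infer_instance
  have hD : D = 0 := by
    ext ξ
    have hξ : ξ ∈ B.range.topologicalClosure ⊔ B.range.topologicalClosureᗮ := by
      rw [Submodule.sup_orthogonal_of_hasOrthogonalProjection]
      trivial
    rw [Submodule.orthogonal_closure] at hξ
    exact sup_le hrange hker hξ
  exact sub_eq_zero.mp hD

theorem exists_norm_le_one_mul_eq_of_norm_apply_le {A B : H →L[𝕜] H} [IsStarNormal B]
    (hAB : ∀ ξ, ‖A ξ‖ ≤ ‖B ξ‖) :
    ∃ x : H →L[𝕜] H, ‖x‖ ≤ 1 ∧ x * B = A ∧ ∀ c, Commute A c → Commute B c → Commute x c := by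
  obtain ⟨x, hx1, hxB, hx⟩ := exists_norm_le_one_comp_eq_of_norm_apply_le hAB
  exact ⟨x, hx1, hxB, fun c hA hB ↦ commute_of_mul_eq_of_orthogonal_range_le_ker hxB hx hA hB⟩

theorem exists_norm_le_one_mul_eq_of_norm_apply_antitone {y : ℕ → H →L[𝕜] H}
    [∀ n, IsStarNormal (y n)] (h0 : ‖y 0‖ ≤ 1) (hy : ∀ n ξ, ‖y (n + 1) ξ‖ ≤ ‖y n ξ‖) :
    ∃ x : ℕ → H →L[𝕜] H, (∀ n, ‖x n‖ ≤ 1) ∧ x 0 = y 0 ∧ (∀ n, x (n + 1) * y n = y (n + 1)) ∧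
      Set.centralizer (Set.range x) = Set.centralizer (Set.range y) := by
  choose z hz1 hz2 hz3 using fun n ↦ exists_norm_le_one_mul_eq_of_norm_apply_le (hy n)
  let x : ℕ → H →L[𝕜] H
    | 0 => y 0
    | n + 1 => z n
  refine ⟨x, ?_, rfl, hz2, ?_⟩
  · rintro (_ | n)
    exacts [h0, hz1 n]
  · ext c
    simp only [Set.mem_centralizer_range_iff]
    refine ⟨fun hx n ↦ ?_, fun hy n ↦ ?_⟩
    · induction n with
      | zero => exact hx 0
      | succ n ih => exact hz2 n ▸ (hx (n + 1)).mul_left ih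
    · cases n with
      | zero => exact hy 0
      | succ n => exact hz3 n c (hy (n + 1)) (hy n)

section Complex

variable {E : Type*} [NormedAddCommGroup E] [InnerProductSpace ℂ E]

theorem isPositive_of_inner_nonneg {T : E →L[ℂ] E} (hT : ∀ ξ, 0 ≤ ⟪T ξ, ξ⟫_ℂ) :
    T.IsPositive := by
  rw [isPositive_iff_complex]
  intro ξ
  obtain ⟨hre, him⟩ := Complex.nonneg_iff.mp (hT ξ)
  exact ⟨Complex.ext rfl (by simpa using him), hre⟩

variable [CompleteSpace E]

theorem norm_sqrt_apply_sq {T : E →L[ℂ] E} (hT : 0 ≤ T) (ξ : E) :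
    ‖CFC.sqrt T ξ‖ ^ 2 = RCLike.re ⟪T ξ, ξ⟫_ℂ := by
  rw [apply_norm_sq_eq_inner_adjoint_left, ← star_eq_adjoint,
    (CFC.sqrt_nonneg T).isSelfAdjoint.star_eq, ← mul_def, CFC.sqrt_mul_sqrt_self T hT]

theorem norm_sqrt_apply_le_of_le {S T : E →L[ℂ] E} (hS : 0 ≤ S) (hST : S ≤ T) (ξ : E) :
    ‖CFC.sqrt S ξ‖ ≤ ‖CFC.sqrt T ξ‖ := by
  have h := ((le_def S T).mp hST).re_inner_nonneg_left ξ
  rw [sub_apply, inner_sub_left, map_sub, sub_nonneg] at h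
  rw [← pow_le_pow_iff_left₀ (norm_nonneg _) (norm_nonneg _) two_ne_zero,
    norm_sqrt_apply_sq hS, norm_sqrt_apply_sq (hS.trans hST)]
  exact h

end Complex

end ContinuousLinearMap

/-- Every decreasing sequence of positive contractions `T n` arises as `T n = y n^* ∘ y n`
for products `y n = x n ∘ ⋯ ∘ x 0` of contractions `x n`, with the double commutant of the
`T n` equal to the double commutant of the `x n`. -/
theorem decreasing_positive_contractions_as_products
    {H : Type*} [NormedAddCommGroup H] [InnerProductSpace ℂ H] [CompleteSpace H]
    (T : ℕ → H →L[ℂ] H)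
    (hpos : ∀ n, ∀ ξ : H, 0 ≤ ⟪(T n) ξ, ξ⟫_ℂ)
    (hcontr : ∀ n, ‖T n‖ ≤ 1)
    (hdec : ∀ n, ∀ ξ : H, ⟪(T (n + 1)) ξ, ξ⟫_ℂ ≤ ⟪(T n) ξ, ξ⟫_ℂ) :
    ∃ x y : ℕ → H →L[ℂ] H,
      (∀ n, ‖x n‖ ≤ 1) ∧
      y 0 = x 0 ∧
      (∀ n, y (n + 1) = (x (n + 1)).comp (y n)) ∧
      (∀ n, T n = (ContinuousLinearMap.adjoint (y n)).comp (y n)) ∧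
      Set.centralizer (Set.centralizer (Set.range T)) =
        Set.centralizer (Set.centralizer (Set.range x)) := by
  have hT (n : ℕ) : 0 ≤ T n :=
    (ContinuousLinearMap.nonneg_iff_isPositive _).mpr
      (ContinuousLinearMap.isPositive_of_inner_nonneg (hpos n))
  have hTle (n : ℕ) : T (n + 1) ≤ T n :=
    ContinuousLinearMap.isPositive_of_inner_nonneg fun ξ ↦ by
      simpa [inner_sub_left] using hdec n ξ
  set y := fun n ↦ CFC.sqrt (T n)
  have hy (n : ℕ) : IsSelfAdjoint (y n) := (CFC.sqrt_nonneg _).isSelfAdjoint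
  have : ∀ n, IsStarNormal (y n) := fun n ↦ (hy n).isStarNormal
  have hy0 : ‖y 0‖ ≤ 1 := by
    rw [CFC.norm_sqrt _ (hT 0)]
    exact Real.sqrt_le_one.mpr (hcontr 0)
  obtain ⟨x, hx1, hx0, hxy, hxy_cent⟩ :=
    ContinuousLinearMap.exists_norm_le_one_mul_eq_of_norm_apply_antitone hy0
      fun n ↦ ContinuousLinearMap.norm_sqrt_apply_le_of_le (hT (n + 1)) (hTle n)
  have hTy_cent : Set.centralizer (Set.range T) = Set.centralizer (Set.range y) := by
    ext c
    simp only [Set.mem_centralizer_range_iff]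
    exact ⟨fun h n ↦ CFC.commute_sqrt_left (h n),
      fun h n ↦ CFC.sqrt_mul_sqrt_self (T n) (hT n) ▸ (h n).mul_left (h n)⟩
  refine ⟨x, y, hx1, hx0.symm, fun n ↦ (hxy n).symm, fun n ↦ ?_, by rw [hTy_cent, hxy_cent]⟩
  rw [← ContinuousLinearMap.star_eq_adjoint, (hy n).star_eq, ← ContinuousLinearMap.mul_def,
    CFC.sqrt_mul_sqrt_self _ (hT n)]
end

section
/- Let H be a complex Hilbert space and let (e_n)_{n∈ℕ} be a sequence of orthogonal projections on H. Then there exists a decreasing sequence T_1 ≥ T_2 ≥ ⋯ of positive linear contractions on H such that the double commutant of {T_1, T_2, …} equals the double commutant of {e_1, e_2, …}. (Consequently, every von Neumann algebra on a separable Hilbert space is generated, as a von Neumann algebra, by a decreasing sequence of positive contractions.) -/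
open scoped InnerProductSpace ComplexOrder

/-!
Put `T n = ∑_{k ≥ n} 2^{-(k+1)} e k`. The tails of a convergent series of positive elements
decrease, and `e n = 2^{n+1} (T n - T (n+1))`, so an operator commuting with every `T n` commutes
with every `e n`; conversely, commuting with every `e k` passes to the norm-convergent sums `T n`.
Hence both sequences have the same commutant, and so the same double commutant.
-/

open Set

section TailSums

variable {G : Type*} [AddCommGroup G] [TopologicalSpace G] [IsTopologicalAddGroup G]

theorem Summable.tsum_nat_add_eq_add [T2Space G] {a : ℕ → G} (ha : Summable a) (n : ℕ) :
    ∑' k, a (k + n) = a n + ∑' k, a (k + (n + 1)) := by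
  simpa only [zero_add, add_right_comm _ 1 n, add_assoc] using
    ((summable_nat_add_iff n).2 ha).tsum_eq_zero_add

theorem antitone_tsum_nat_add [PartialOrder G] [IsOrderedAddMonoid G] [OrderClosedTopology G]
    {a : ℕ → G} (ha : Summable a) (ha0 : ∀ n, 0 ≤ a n) :
    Antitone fun n => ∑' k, a (k + n) :=
  antitone_nat_of_succ_le fun n => by
    rw [ha.tsum_nat_add_eq_add n]
    exact le_add_of_nonneg_left (ha0 n)

theorem norm_tsum_nat_add_le {E : Type*} [SeminormedAddCommGroup E] {a : ℕ → E} {w : ℕ → ℝ}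
    (hw : Summable w) (haw : ∀ k, ‖a k‖ ≤ w k) (n : ℕ) :
    ‖∑' k, a (k + n)‖ ≤ ∑' k, w k :=
  calc ‖∑' k, a (k + n)‖ ≤ ∑' k, w (k + n) :=
        tsum_of_norm_bounded ((summable_nat_add_iff n).2 hw).hasSum fun k => haw (k + n)
    _ ≤ ∑' k, w k :=
        tsum_comp_le_tsum_of_inj hw (fun k => (norm_nonneg _).trans (haw k)) (add_left_injective n)

variable {R : Type*} [NonUnitalNonAssocRing R] [TopologicalSpace R] [IsTopologicalRing R]
  [T2Space R]

theorem centralizer_range_tsum_nat_add {a : ℕ → R} (ha : Summable a) :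
    centralizer (range fun n => ∑' k, a (k + n)) = centralizer (range a) := by
  ext x
  simp only [mem_centralizer_iff, forall_mem_range]
  constructor
  · intro hx n
    have h := Commute.sub_left (hx n) (hx (n + 1))
    rwa [ha.tsum_nat_add_eq_add n, add_sub_cancel_right] at h
  · exact fun hx n => Commute.tsum_left x fun k => hx (k + n)

end TailSums

theorem centralizer_range_smul {𝕜 R ι : Type*} [GroupWithZero 𝕜] [Mul R] [MulAction 𝕜 R]
    [SMulCommClass 𝕜 R R] [IsScalarTower 𝕜 R R] {c : ι → 𝕜} (hc : ∀ i, c i ≠ 0) (a : ι → R) :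
    centralizer (range fun i => c i • a i) = centralizer (range a) := by
  ext x
  simp only [mem_centralizer_iff, forall_mem_range]
  exact forall_congr' fun i => Commute.smul_left_iff₀ (hc i)

theorem exists_antitone_nonneg_centralizer_range_eq {A : Type*} [NonUnitalCStarAlgebra A]
    [PartialOrder A] [StarOrderedRing A] (a : ℕ → A) (ha0 : ∀ n, 0 ≤ a n)
    (ha1 : ∀ n, ‖a n‖ ≤ 1) :
    ∃ T : ℕ → A, (∀ n, 0 ≤ T n) ∧ (∀ n, ‖T n‖ ≤ 1) ∧ Antitone T ∧
      centralizer (range T) = centralizer (range a) := by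
  obtain ⟨w, hw, hw0⟩ : ∃ w : ℕ → ℝ, HasSum w 1 ∧ ∀ k, 0 < w k :=
    ⟨_, hasSum_geometric_two' 1, fun k => by positivity⟩
  have hwa : ∀ k, ‖w k • a k‖ ≤ w k := fun k => by
    simpa [norm_smul, abs_of_pos (hw0 k)] using
      mul_le_mul_of_nonneg_left (ha1 k) (hw0 k).le
  have hsum : Summable fun k => w k • a k := .of_norm_bounded hw.summable hwa
  refine ⟨fun n => ∑' k, w (k + n) • a (k + n), fun n => ?_, fun n => ?_, ?_, ?_⟩
  · exact tsum_nonneg fun k => smul_nonneg (hw0 _).le (ha0 _)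
  · exact (norm_tsum_nat_add_le hw.summable hwa n).trans hw.tsum_eq.le
  · exact antitone_tsum_nat_add hsum fun k => smul_nonneg (hw0 k).le (ha0 k)
  · rw [centralizer_range_tsum_nat_add hsum, centralizer_range_smul (fun k => (hw0 k).ne')]

/-- For any sequence of orthogonal projections `e n` there is a decreasing sequence of
positive contractions `T n` generating the same von Neumann algebra (the double commutants
coincide). -/
theorem vonNeumann_algebra_generated_by_decreasing_contractions
    {H : Type*} [NormedAddCommGroup H] [InnerProductSpace ℂ H] [CompleteSpace H]
    (e : ℕ → H →L[ℂ] H)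
    (heSa : ∀ n, IsSelfAdjoint (e n))
    (heIdem : ∀ n, (e n).comp (e n) = e n) :
    ∃ T : ℕ → H →L[ℂ] H,
      (∀ n, ∀ ξ : H, 0 ≤ ⟪(T n) ξ, ξ⟫_ℂ) ∧
      (∀ n, ‖T n‖ ≤ 1) ∧
      (∀ n, ∀ ξ : H, ⟪(T (n + 1)) ξ, ξ⟫_ℂ ≤ ⟪(T n) ξ, ξ⟫_ℂ) ∧
      Set.centralizer (Set.centralizer (Set.range T)) =
        Set.centralizer (Set.centralizer (Set.range e)) := by
  have he : ∀ n, IsStarProjection (e n) := fun n => ⟨heIdem n, heSa n⟩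
  obtain ⟨T, hT0, hT1, hTanti, hTe⟩ := exists_antitone_nonneg_centralizer_range_eq e
    (fun n => (he n).nonneg) (fun n => (he n).norm_le)
  refine ⟨T, fun n => ((T n).nonneg_iff_isPositive.1 (hT0 n)).inner_nonneg_left, hT1,
    fun n ξ => ?_, by rw [hTe]⟩
  have h := ((ContinuousLinearMap.le_def _ _).1 (hTanti n.le_succ)).inner_nonneg_left ξ
  rwa [sub_apply, inner_sub_left, sub_nonneg] at h
end

section
/- Let H be a complex Hilbert space, T_1 ≥ T_2 ≥ ⋯ a decreasing sequence of positive linear contractions on H, T the strong operator limit of (T_n), and P the orthogonal projection onto {ξ ∈ H : Tξ = ξ}. Let σ : ℕ → ℕ be proper and S_n^σ := T_{σ(n)} ⋯ T_{σ(1)}. Then (S_n^σ)^* ξ → P ξ in norm for every ξ ∈ H; in particular S_n^σ → P in the weak operator topology. -/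
open Filter Topology
open scoped InnerProductSpace ComplexOrder

/-!
In the Loewner order `0 ≤ T ≤ Tₖ ≤ 1`, and a vector fixed by `T` is then fixed by every `Tₖ`
(for a positive contraction `B`, `‖Bx - x‖² ≤ ‖x‖² - re ⟪Bx, x⟫`), hence by every `(S_n^σ)^*`.
So it suffices to show `(S_n^σ)^* μ → 0` for `μ` orthogonal to the fixed vectors of `T`.

For a positive contraction `B` the powers `Bʲ` decrease, so `a j = ⟪Bʲμ, μ⟫` converges and
`‖Bᵐμ - Bᵏμ‖² = a (2m) + a (2k) - 2 a (m + k)` shows that `Bᵐμ` is Cauchy. Its limit is fixed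
by `B` and orthogonal to the fixed vectors, so `Tᵐμ → 0`.

Finally `(S_{n+1}^σ)^* = (S_n^σ)^* T_{σ(n+1)}` is a contraction and `T_{σ(n+1)} → T` strongly
because `σ` is proper, so by induction on `m`, eventually `‖(S_n^σ)^* μ‖ < ‖Tᵐμ‖ + ε`.
-/

namespace ContinuousLinearMap

section Approximation

variable {𝕜 E F : Type*} [NontriviallyNormedField 𝕜] [SeminormedAddCommGroup E]
  [NormedSpace 𝕜 E] [SeminormedAddCommGroup F] [NormedSpace 𝕜 F]
  {R : ℕ → E →L[𝕜] F} {U : ℕ → E →L[𝕜] E} {L : E →L[𝕜] E}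

theorem eventually_norm_apply_lt_norm_pow_apply_add (hR : ∀ n, ‖R n‖ ≤ 1)
    (hRU : ∀ n, R (n + 1) = (R n).comp (U n))
    (hU : ∀ v, Tendsto (fun n => U n v) atTop (𝓝 (L v))) (m : ℕ) (v : E) {ε : ℝ}
    (hε : 0 < ε) : ∀ᶠ n in atTop, ‖R n v‖ < ‖(L ^ m) v‖ + ε := by
  induction m generalizing v ε with
  | zero =>
    refine Eventually.of_forall fun n => ?_
    have := (R n).le_of_opNorm_le (hR n) v
    rw [pow_zero, one_apply_eq_self]
    linarith
  | succ m ih =>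
    rw [← map_add_atTop_eq_nat 1, eventually_map]
    filter_upwards [ih (L v) (half_pos hε), Metric.tendsto_nhds.1 (hU v) _ (half_pos hε)]
      with n hRL hUL
    rw [dist_eq_norm] at hUL
    have hsplit : R (n + 1) v = R n (L v) + R n (U n v - L v) := by
      rw [hRU, comp_apply, map_sub, add_sub_cancel]
    calc ‖R (n + 1) v‖ = ‖R n (L v) + R n (U n v - L v)‖ := by rw [hsplit]
      _ ≤ ‖R n (L v)‖ + ‖R n (U n v - L v)‖ := norm_add_le _ _
      _ ≤ ‖R n (L v)‖ + 1 * ‖U n v - L v‖ := by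
        gcongr
        exact (R n).le_of_opNorm_le (hR n) _
      _ < ‖(L ^ m) (L v)‖ + ε / 2 + ε / 2 := by linarith
      _ = ‖(L ^ (m + 1)) v‖ + ε := by
        rw [pow_succ, mul_apply_eq_comp, add_assoc, add_halves]

theorem tendsto_apply_zero_of_tendsto_pow_apply_zero (hR : ∀ n, ‖R n‖ ≤ 1)
    (hRU : ∀ n, R (n + 1) = (R n).comp (U n))
    (hU : ∀ v, Tendsto (fun n => U n v) atTop (𝓝 (L v))) {v : E}
    (hv : Tendsto (fun m => (L ^ m) v) atTop (𝓝 0)) :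
    Tendsto (fun n => R n v) atTop (𝓝 0) := by
  refine Metric.tendsto_nhds.2 fun ε hε => ?_
  obtain ⟨m, hm⟩ := (Metric.tendsto_nhds.1 hv _ (half_pos hε)).exists
  filter_upwards [eventually_norm_apply_lt_norm_pow_apply_add hR hRU hU m v (half_pos hε)]
    with n hn
  rw [dist_zero_right] at hm ⊢
  linarith

end Approximation

variable {H : Type*} [NormedAddCommGroup H] [InnerProductSpace ℂ H]

theorem isPositive_of_inner_nonneg_s10 {T : H →L[ℂ] H} (h : ∀ x, 0 ≤ ⟪T x, x⟫_ℂ) :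
    T.IsPositive :=
  (isPositive_iff_complex T).2 fun x => by
    obtain ⟨hre, him⟩ := Complex.nonneg_iff.1 (h x)
    exact ⟨Complex.ext (by simp) (by simpa using him), hre⟩

theorem IsPositive.of_tendsto_apply {ι : Type*} {l : Filter ι} [l.NeBot]
    {T : ι → H →L[ℂ] H} {L : H →L[ℂ] H} (hT : ∀ x, Tendsto (fun i => T i x) l (𝓝 (L x)))
    (hpos : ∀ᶠ i in l, (T i).IsPositive) : L.IsPositive :=
  isPositive_of_inner_nonneg_s10 fun x =>
    ge_of_tendsto ((hT x).inner tendsto_const_nhds) (hpos.mono fun _ hi => hi.inner_nonneg_left x)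

theorem le_of_tendsto_apply {ι : Type*} {l : Filter ι} [l.NeBot] {T : ι → H →L[ℂ] H}
    {L A : H →L[ℂ] H} (hT : ∀ x, Tendsto (fun i => T i x) l (𝓝 (L x)))
    (h : ∀ᶠ i in l, T i ≤ A) : L ≤ A :=
  IsPositive.of_tendsto_apply (fun x => by simpa using (hT x).const_sub (A x)) h

theorem ge_of_tendsto_apply {ι : Type*} {l : Filter ι} [l.NeBot] {T : ι → H →L[ℂ] H}
    {L A : H →L[ℂ] H} (hT : ∀ x, Tendsto (fun i => T i x) l (𝓝 (L x)))
    (h : ∀ᶠ i in l, A ≤ T i) : A ≤ L :=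
  IsPositive.of_tendsto_apply (fun x => by simpa using (hT x).sub_const (A x)) h

theorem re_inner_le_re_inner_of_le {S T : H →L[ℂ] H} (h : S ≤ T) (x : H) :
    (⟪S x, x⟫_ℂ).re ≤ (⟪T x, x⟫_ℂ).re := by
  simpa [inner_sub_left] using ((le_def S T).1 h).re_inner_nonneg_left x

variable [CompleteSpace H]

theorem inner_pow_apply_pow_apply {B : H →L[ℂ] H} (hB : IsSelfAdjoint B) (m k : ℕ) (x : H) :
    ⟪(B ^ m) x, (B ^ k) x⟫_ℂ = ⟪(B ^ (k + m)) x, x⟫_ℂ := by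
  rw [← (hB.pow k).adjoint_eq, adjoint_inner_right, pow_add, mul_apply_eq_comp]

section PositiveContraction

variable {B : H →L[ℂ] H}

theorem norm_apply_sq_le_re_inner_s10 (h0 : 0 ≤ B) (h1 : B ≤ 1) (x : H) :
    ‖B x‖ ^ 2 ≤ (⟪B x, x⟫_ℂ).re := by
  have hB : IsSelfAdjoint B := ((nonneg_iff_isPositive B).1 h0).isSelfAdjoint
  have hsq : ‖B x‖ ^ 2 = (⟪(B ^ 2) x, x⟫_ℂ).re := by
    rw [← inner_pow_apply_pow_apply hB 1 1, pow_one]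
    exact (inner_self_eq_norm_sq (𝕜 := ℂ) _).symm
  simpa only [hsq, pow_one] using
    re_inner_le_re_inner_of_le (CStarAlgebra.pow_antitone h0 h1 one_le_two) x

theorem apply_eq_self_of_norm_sq_le (h0 : 0 ≤ B) (h1 : B ≤ 1) {x : H}
    (hx : ‖x‖ ^ 2 ≤ (⟪B x, x⟫_ℂ).re) : B x = x := by
  have hsq : ‖B x - x‖ ^ 2 = ‖B x‖ ^ 2 - 2 * (⟪B x, x⟫_ℂ).re + ‖x‖ ^ 2 :=
    @norm_sub_sq ℂ _ _ _ _ _ _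
  have hle : ‖B x - x‖ ^ 2 ≤ 0 := by linarith [norm_apply_sq_le_re_inner_s10 h0 h1 x]
  exact sub_eq_zero.1 (norm_eq_zero.1 (by nlinarith [norm_nonneg (B x - x)]))

theorem apply_eq_self_of_le (h0 : 0 ≤ B) (h1 : B ≤ 1) {A : H →L[ℂ] H} (hAB : A ≤ B) {x : H}
    (hx : A x = x) : B x = x := by
  refine apply_eq_self_of_norm_sq_le h0 h1 ?_
  calc ‖x‖ ^ 2 = (⟪A x, x⟫_ℂ).re := by
        rw [hx]
        exact (inner_self_eq_norm_sq (𝕜 := ℂ) x).symm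
    _ ≤ (⟪B x, x⟫_ℂ).re := re_inner_le_re_inner_of_le hAB x

theorem exists_tendsto_pow_apply (h0 : 0 ≤ B) (h1 : B ≤ 1) (x : H) :
    ∃ y, B y = y ∧ Tendsto (fun m => (B ^ m) x) atTop (𝓝 y) := by
  have hB : IsSelfAdjoint B := ((nonneg_iff_isPositive B).1 h0).isSelfAdjoint
  set a : ℕ → ℝ := fun j => (⟪(B ^ j) x, x⟫_ℂ).re with ha
  have ha_anti : Antitone a := fun i j hij =>
    re_inner_le_re_inner_of_le (CStarAlgebra.pow_antitone h0 h1 hij) x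
  have ha_nonneg : ∀ j, 0 ≤ a j := fun j =>
    ((nonneg_iff_isPositive _).1 (CStarAlgebra.pow_nonneg h0 j)).re_inner_nonneg_left x
  have haL := tendsto_atTop_ciInf ha_anti ⟨0, Set.forall_mem_range.2 ha_nonneg⟩
  have hdist : ∀ m k,
      dist ((B ^ m) x) ((B ^ k) x) ^ 2 = a (m + m) + a (k + k) - 2 * a (k + m) := by
    intro m k
    rw [dist_eq_norm, @norm_sub_sq ℂ, ← inner_self_eq_norm_sq (𝕜 := ℂ),
      ← inner_self_eq_norm_sq (𝕜 := ℂ), inner_pow_apply_pow_apply hB,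
      inner_pow_apply_pow_apply hB, inner_pow_apply_pow_apply hB]
    simp only [ha, RCLike.re_to_complex]
    ring
  have hcauchy : CauchySeq fun m => (B ^ m) x := by
    rw [cauchySeq_iff_tendsto_dist_atTop_0, ← prod_atTop_atTop_eq]
    have hfst : Tendsto (fun p : ℕ × ℕ => p.1) (atTop ×ˢ atTop) atTop := tendsto_fst
    have hsnd : Tendsto (fun p : ℕ × ℕ => p.2) (atTop ×ˢ atTop) atTop := tendsto_snd
    have hsq : Tendsto (fun p : ℕ × ℕ => dist ((B ^ p.1) x) ((B ^ p.2) x) ^ 2)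
        (atTop ×ˢ atTop) (𝓝 0) := by
      simp only [hdist]
      have := ((haL.comp (hfst.atTop_add_atTop hfst)).add
        (haL.comp (hsnd.atTop_add_atTop hsnd))).sub
        ((haL.comp (hsnd.atTop_add_atTop hfst)).const_mul 2)
      simpa [Function.comp_def, two_mul] using this
    simpa using hsq.sqrt
  obtain ⟨y, hy⟩ := cauchySeq_tendsto_of_complete hcauchy
  refine ⟨y, tendsto_nhds_unique ((B.continuous.tendsto y).comp hy) ?_, hy⟩
  simpa [pow_succ', mul_apply_eq_comp, Function.comp_def] using
    (tendsto_add_atTop_iff_nat 1).2 hy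

theorem tendsto_pow_apply_zero_of_forall_inner_eq_zero (h0 : 0 ≤ B) (h1 : B ≤ 1) {x : H}
    (hx : ∀ w, B w = w → ⟪x, w⟫_ℂ = 0) : Tendsto (fun m => (B ^ m) x) atTop (𝓝 0) := by
  obtain ⟨y, hBy, hy⟩ := exists_tendsto_pow_apply h0 h1 x
  have hB : IsSelfAdjoint B := ((nonneg_iff_isPositive B).1 h0).isSelfAdjoint
  have hxy : ∀ m, ⟪(B ^ m) x, y⟫_ℂ = 0 := fun m => by
    rw [← adjoint_inner_right, (hB.pow m).adjoint_eq, pow_apply_eq_iterate,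
      Function.iterate_fixed hBy, hx y hBy]
  have hyy : ⟪y, y⟫_ℂ = 0 := tendsto_nhds_unique (hy.inner tendsto_const_nhds)
    (by simpa only [hxy] using tendsto_const_nhds)
  rwa [inner_self_eq_zero.1 hyy] at hy

end PositiveContraction

end ContinuousLinearMap

section prodSeq

variable {H : Type*} [NormedAddCommGroup H] [InnerProductSpace ℂ H] {T : ℕ → H →L[ℂ] H}
  {σ : ℕ → ℕ}

theorem norm_prodSeq_le_one (hT : ∀ k, ‖T k‖ ≤ 1) (n : ℕ) : ‖prodSeq T σ n‖ ≤ 1 := by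
  induction n with
  | zero => exact hT (σ 0)
  | succ n ih =>
    exact (ContinuousLinearMap.opNorm_comp_le _ _).trans (mul_le_one₀ (hT _) (norm_nonneg _) ih)

variable [CompleteSpace H]

theorem adjoint_prodSeq_succ (hT : ∀ k, IsSelfAdjoint (T k)) (n : ℕ) :
    ContinuousLinearMap.adjoint (prodSeq T σ (n + 1))
      = (ContinuousLinearMap.adjoint (prodSeq T σ n)).comp (T (σ (n + 1))) := by
  rw [prodSeq, ContinuousLinearMap.adjoint_comp, (hT _).adjoint_eq]

theorem adjoint_prodSeq_apply_of_forall_apply_eq (hT : ∀ k, IsSelfAdjoint (T k)) {w : H}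
    (hw : ∀ k, T k w = w) (n : ℕ) : ContinuousLinearMap.adjoint (prodSeq T σ n) w = w := by
  induction n with
  | zero => rw [prodSeq, (hT _).adjoint_eq, hw]
  | succ n ih => rw [adjoint_prodSeq_succ hT, ContinuousLinearMap.comp_apply, hw, ih]

end prodSeq

open ContinuousLinearMap in
/-- For a proper `σ`, `(S_n^σ)^* ξ → P ξ` in norm for every `ξ`; in particular
`S_n^σ → P` in the weak operator topology. -/
theorem adjoint_of_sigma_products_tendsto_strongly
    {H : Type*} [NormedAddCommGroup H] [InnerProductSpace ℂ H] [CompleteSpace H]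
    (T : ℕ → H →L[ℂ] H)
    (hpos : ∀ n, ∀ ξ : H, 0 ≤ ⟪(T n) ξ, ξ⟫_ℂ)
    (hcontr : ∀ n, ‖T n‖ ≤ 1)
    (hdec : ∀ n, ∀ ξ : H, ⟪(T (n + 1)) ξ, ξ⟫_ℂ ≤ ⟪(T n) ξ, ξ⟫_ℂ)
    (Tlim : H →L[ℂ] H)
    (hTlim : ∀ ξ : H, Tendsto (fun n => (T n) ξ) atTop (𝓝 (Tlim ξ)))
    (P : H →L[ℂ] H)
    (hPmem : ∀ ξ : H, Tlim (P ξ) = P ξ)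
    (hPorth : ∀ ξ η : H, Tlim η = η → ⟪ξ - P ξ, η⟫_ℂ = 0)
    (σ : ℕ → ℕ) (hσ : ∀ k, (σ ⁻¹' {k}).Finite) :
    (∀ ξ : H,
      Tendsto (fun n => (ContinuousLinearMap.adjoint (prodSeq T σ n)) ξ) atTop (𝓝 (P ξ))) ∧
    (∀ ξ η : H,
      Tendsto (fun n => ⟪prodSeq T σ n ξ, η⟫_ℂ) atTop (𝓝 ⟪P ξ, η⟫_ℂ)) := by
  have hT0 (n : ℕ) : 0 ≤ T n := (nonneg_iff_isPositive _).2 (isPositive_of_inner_nonneg_s10 (hpos n))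
  have hT1 (n : ℕ) : T n ≤ 1 := (CStarAlgebra.norm_le_one_iff_of_nonneg _ (hT0 n)).1 (hcontr n)
  have hTanti : Antitone T := antitone_nat_of_succ_le fun n =>
    isPositive_of_inner_nonneg_s10 fun ξ => by
      simpa only [sub_apply, inner_sub_left, sub_nonneg] using hdec n ξ
  have hlim0 : 0 ≤ Tlim := ge_of_tendsto_apply hTlim (Eventually.of_forall hT0)
  have hlimT (k : ℕ) : Tlim ≤ T k :=
    le_of_tendsto_apply hTlim ((eventually_ge_atTop k).mono fun _ hn => hTanti hn)
  have hsa (k : ℕ) : IsSelfAdjoint (T k) := ((nonneg_iff_isPositive _).1 (hT0 k)).isSelfAdjoint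
  have hσ' : Tendsto σ atTop atTop := by
    simpa only [Nat.cofinite_eq_atTop] using Tendsto.cofinite_of_finite_preimage_singleton hσ
  have hadj (ξ : H) : Tendsto (fun n => adjoint (prodSeq T σ n) ξ) atTop (𝓝 (P ξ)) := by
    have hPξ := adjoint_prodSeq_apply_of_forall_apply_eq (σ := σ) hsa
      fun k => apply_eq_self_of_le (hT0 k) (hT1 k) (hlimT k) (hPmem ξ)
    have hμ := tendsto_apply_zero_of_tendsto_pow_apply_zero
      (fun n => (adjoint.norm_map _).trans_le (norm_prodSeq_le_one hcontr n))
      (adjoint_prodSeq_succ hsa) (fun v => (hTlim v).comp (hσ'.comp (tendsto_add_atTop_nat 1)))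
      (tendsto_pow_apply_zero_of_forall_inner_eq_zero hlim0 ((hlimT 0).trans (hT1 0))
        (hPorth ξ))
    simpa [map_sub, hPξ] using hμ.add_const (P ξ)
  refine ⟨hadj, fun ξ η => ?_⟩
  have hPsymm : ⟪ξ, P η⟫_ℂ = ⟪P ξ, η⟫_ℂ := by
    have h1 := hPorth ξ (P η) (hPmem η)
    have h2 := hPorth η (P ξ) (hPmem ξ)
    rw [inner_sub_left, sub_eq_zero] at h1 h2
    rw [h1, ← inner_conj_symm (P ξ) η, h2, inner_conj_symm]
  simpa only [adjoint_inner_right, hPsymm] using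
    (tendsto_const_nhds (x := ξ)).inner (𝕜 := ℂ) (hadj η)
end

section
/- Let H be a complex Hilbert space, T_1 ≥ T_2 ≥ ⋯ a decreasing sequence of positive linear contractions on H, σ : ℕ → ℕ proper, and S_n^σ := T_{σ(n)} ⋯ T_{σ(1)}. Then for every ξ ∈ H and every k ∈ ℕ, ‖S_{n+k}^σ ξ − S_n^σ ξ‖ → 0 as n → ∞. -/
/-!
For a positive contraction `T` one has `T ^ 2 ≤ T`, which turns into
`‖T x - x‖ ^ 2 ≤ ‖x‖ ^ 2 - ‖T x‖ ^ 2`. Along the orbit `x n = S_n^σ ξ` the squared norms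
therefore decrease, hence converge, and the squared steps `‖x (n + 1) - x n‖ ^ 2` are bounded
by their consecutive differences, so they tend to `0`; a `k`-step difference is a sum of `k`
such steps.
-/

open Filter Topology
open scoped InnerProductSpace ComplexOrder

namespace ContinuousLinearMap

theorem isPositive_of_inner_nonneg_complex {E : Type*} [NormedAddCommGroup E]
    [InnerProductSpace ℂ E] {T : E →L[ℂ] E} (hT : ∀ x, 0 ≤ ⟪T x, x⟫_ℂ) : T.IsPositive := by
  refine (isPositive_iff_complex T).2 fun x => ⟨?_, (Complex.nonneg_iff.1 (hT x)).1⟩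
  obtain ⟨r, -, hr⟩ := RCLike.nonneg_iff_exists_ofReal.1 (hT x)
  simp [← hr]

variable {𝕜 E : Type*} [RCLike 𝕜] [NormedAddCommGroup E] [InnerProductSpace 𝕜 E]
  {T : E →L[𝕜] E}

open RCLike in
theorem IsPositive.norm_apply_sq_le_re_inner (hT : T.IsPositive) (hT₁ : ‖T‖ ≤ 1) (x : E) :
    ‖T x‖ ^ 2 ≤ re ⟪T x, x⟫_𝕜 := by
  have hTx : re ⟪T (T x), T x⟫_𝕜 ≤ ‖T x‖ ^ 2 := calc
    re ⟪T (T x), T x⟫_𝕜 ≤ ‖T (T x)‖ * ‖T x‖ := re_inner_le_norm _ _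
    _ ≤ ‖T x‖ * ‖T x‖ := by gcongr; simpa using T.le_of_opNorm_le hT₁ (T x)
    _ = ‖T x‖ ^ 2 := (sq _).symm
  -- positivity of `T` tested on `x - T x`
  have hpos := hT.re_inner_nonneg_left (x - T x)
  have hexpand : re ⟪T (x - T x), x - T x⟫_𝕜
      = re ⟪T x, x⟫_𝕜 - 2 * ‖T x‖ ^ 2 + re ⟪T (T x), T x⟫_𝕜 := by
    rw [map_sub, inner_sub_left, inner_sub_right, inner_sub_right,
      hT.inner_left_eq_inner_right (T x) x]
    simp only [map_sub, inner_self_eq_norm_sq]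
    ring
  linarith

theorem IsPositive.norm_apply_sub_sq_le (hT : T.IsPositive) (hT₁ : ‖T‖ ≤ 1) (x : E) :
    ‖T x - x‖ ^ 2 ≤ ‖x‖ ^ 2 - ‖T x‖ ^ 2 := by
  rw [norm_sub_sq (𝕜 := 𝕜)]
  linarith [hT.norm_apply_sq_le_re_inner hT₁ x]

end ContinuousLinearMap

theorem tendsto_dist_add_of_tendsto_dist_succ {α : Type*} [PseudoMetricSpace α] {x : ℕ → α}
    (h : Tendsto (fun n => dist (x n) (x (n + 1))) atTop (𝓝 0)) (k : ℕ) :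
    Tendsto (fun n => dist (x n) (x (n + k))) atTop (𝓝 0) := by
  have hsum : Tendsto (fun n => ∑ i ∈ Finset.range k, dist (x (n + i)) (x (n + i + 1)))
      atTop (𝓝 0) := by
    simpa using tendsto_finsetSum (Finset.range k) fun i _ => h.comp (tendsto_add_atTop_nat i)
  exact squeeze_zero (fun n => dist_nonneg)
    (fun n => dist_le_range_sum_dist (fun i => x (n + i)) k) hsum

theorem Antitone.tendsto_sub_succ {a : ℕ → ℝ} (ha : Antitone a) (hbdd : BddBelow (Set.range a)) :
    Tendsto (fun n => a n - a (n + 1)) atTop (𝓝 0) := by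
  have hlim := tendsto_atTop_ciInf ha hbdd
  simpa using hlim.sub (hlim.comp (tendsto_add_atTop_nat 1))

theorem tendsto_norm_sub_of_norm_sub_succ_sq_le {E : Type*} [SeminormedAddCommGroup E]
    {x : ℕ → E} (h : ∀ n, ‖x (n + 1) - x n‖ ^ 2 ≤ ‖x n‖ ^ 2 - ‖x (n + 1)‖ ^ 2) (k : ℕ) :
    Tendsto (fun n => ‖x (n + k) - x n‖) atTop (𝓝 0) := by
  have hanti : Antitone fun n => ‖x n‖ ^ 2 :=
    antitone_nat_of_succ_le fun n => by linarith [h n, sq_nonneg ‖x (n + 1) - x n‖]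
  have hdecr := hanti.tendsto_sub_succ ⟨0, by rintro _ ⟨n, rfl⟩; positivity⟩
  have hstep : Tendsto (fun n => dist (x n) (x (n + 1))) atTop (𝓝 0) := by
    refine squeeze_zero (fun n => dist_nonneg) (fun n => ?_) (by simpa using hdecr.sqrt)
    rw [dist_eq_norm']
    exact Real.le_sqrt_of_sq_le (h n)
  simpa only [dist_eq_norm'] using tendsto_dist_add_of_tendsto_dist_succ hstep k

theorem sigma_products_consecutive_differences_tendsto_zero_general
    {H : Type*} [NormedAddCommGroup H] [InnerProductSpace ℂ H]
    (T : ℕ → H →L[ℂ] H)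
    (hpos : ∀ n, ∀ ξ : H, 0 ≤ ⟪(T n) ξ, ξ⟫_ℂ)
    (hcontr : ∀ n, ‖T n‖ ≤ 1)
    (σ : ℕ → ℕ) :
    ∀ (ξ : H) (k : ℕ),
      Tendsto (fun n => ‖prodSeq T σ (n + k) ξ - prodSeq T σ n ξ‖) atTop (𝓝 0) := fun ξ =>
  tendsto_norm_sub_of_norm_sub_succ_sq_le (x := fun n => prodSeq T σ n ξ) fun n =>
    (ContinuousLinearMap.isPositive_of_inner_nonneg_complex (hpos _)).norm_apply_sub_sq_le
      (hcontr _) (prodSeq T σ n ξ)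

/-- For every `ξ` and `k`, `‖S_{n+k}^σ ξ - S_n^σ ξ‖ → 0` as `n → ∞`. -/
theorem sigma_products_consecutive_differences_tendsto_zero
    {H : Type*} [NormedAddCommGroup H] [InnerProductSpace ℂ H] [CompleteSpace H]
    (T : ℕ → H →L[ℂ] H)
    (hpos : ∀ n, ∀ ξ : H, 0 ≤ ⟪(T n) ξ, ξ⟫_ℂ)
    (hcontr : ∀ n, ‖T n‖ ≤ 1)
    (hdec : ∀ n, ∀ ξ : H, ⟪(T (n + 1)) ξ, ξ⟫_ℂ ≤ ⟪(T n) ξ, ξ⟫_ℂ)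
    (σ : ℕ → ℕ) (hσ : ∀ k, (σ ⁻¹' {k}).Finite) :
    ∀ (ξ : H) (k : ℕ),
      Tendsto (fun n => ‖prodSeq T σ (n + k) ξ - prodSeq T σ n ξ‖) atTop (𝓝 0) :=
  sigma_products_consecutive_differences_tendsto_zero_general T hpos hcontr σ
end

section
/- Let H be a complex Hilbert space, T_1 ≥ T_2 ≥ ⋯ a decreasing sequence of positive linear contractions on H, T the strong operator limit of (T_n), and P the orthogonal projection onto {ξ ∈ H : Tξ = ξ}. Define H_𝒮 := ⋂_{σ proper} H_σ, where H_σ := {ξ ∈ H : ‖T_{σ(n)} ⋯ T_{σ(1)} ξ − P ξ‖ → 0}, and let e be the orthogonal projection onto H_𝒮. Let u be a bounded linear operator on H which commutes with T_n for every n ∈ ℕ and is a partial isometry with u^* u = e. Then the range of u u^* is contained in H_𝒮, i.e., u u^* ≤ e. -/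
open Filter Topology
open scoped InnerProductSpace ComplexOrder

theorem CStarRing.mul_star_mul_self_of_isIdempotentElem {A : Type*} [NonUnitalNormedRing A]
    [StarRing A] [CStarRing A] {u : A} (h : IsIdempotentElem (star u * u)) :
    u * (star u * u) = u := by
  have hzero : star (u - u * (star u * u)) * (u - u * (star u * u)) = 0 := by
    simp only [star_sub, star_mul, star_star, sub_mul, mul_sub, mul_assoc]
    simp only [← mul_assoc (star u) u, h.eq]
    noncomm_ring
  exact (sub_eq_zero.mp ((CStarRing.star_mul_self_eq_zero_iff _).mp hzero)).symm

namespace ContinuousLinearMap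

section Topological

variable {R M : Type*} [Semiring R] [TopologicalSpace M] [AddCommMonoid M] [Module R M]

theorem commute_of_tendsto [T2Space M] {ι : Type*} {l : Filter ι} [l.NeBot]
    {T : ι → M →L[R] M} {A u : M →L[R] M} (hT : ∀ x, Tendsto (fun i => T i x) l (𝓝 (A x)))
    (hu : ∀ i, Commute u (T i)) : Commute u A := by
  ext x
  refine tendsto_nhds_unique ((u.continuous.tendsto _).comp (hT x)) ?_
  simpa only [Function.comp_def, ← mul_apply_eq_comp, (hu _).eq] using hT (u x)

theorem apply_eq_of_commute {A u : M →L[R] M} (hu : Commute u A) {y : M} (hy : A y = y) :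
    A (u y) = u y := by
  rw [← mul_apply_eq_comp, ← hu.eq, mul_apply_eq_comp, hy]

end Topological

variable {𝕜 E : Type*} [RCLike 𝕜] [NormedAddCommGroup E] [InnerProductSpace 𝕜 E]

theorem isIdempotentElem_of_apply_mem_of_inner_sub_eq_zero {K : Submodule 𝕜 E} {e : E →L[𝕜] E}
    (hmem : ∀ x, e x ∈ K) (horth : ∀ x, ∀ y ∈ K, ⟪x - e x, y⟫_𝕜 = 0) : IsIdempotentElem e := by
  ext x
  have hd : e x - e (e x) ∈ K := K.sub_mem (hmem x) (hmem (e x))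
  exact (sub_eq_zero.mp (inner_self_eq_zero.mp (horth (e x) _ hd))).symm

theorem commute_of_fixedPoints_projection [CompleteSpace E] {A P u : E →L[𝕜] E}
    (hPmem : ∀ x, A (P x) = P x) (hPorth : ∀ x y, A y = y → ⟪x - P x, y⟫_𝕜 = 0)
    (hu : Commute u A) (hu' : Commute (adjoint u) A) : Commute P u := by
  ext x
  set d := P (u x) - u (P x)
  have hd : A d = d := by simp only [d, map_sub, hPmem, apply_eq_of_commute hu (hPmem x)]
  have h1 : ⟪u x - P (u x), d⟫_𝕜 = 0 := hPorth (u x) d hd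
  have h2 : ⟪u x - u (P x), d⟫_𝕜 = 0 := by
    rw [← map_sub, ← adjoint_inner_right]
    exact hPorth x _ (apply_eq_of_commute hu' hd)
  have : ⟪d, d⟫_𝕜 = 0 := by
    calc ⟪d, d⟫_𝕜 = ⟪(u x - u (P x)) - (u x - P (u x)), d⟫_𝕜 := by rw [sub_sub_sub_cancel_left]
      _ = 0 := by rw [inner_sub_left, h1, h2, sub_zero]
  exact sub_eq_zero.mp (inner_self_eq_zero.mp this)

theorem isSelfAdjoint_of_inner_nonneg {H : Type*} [NormedAddCommGroup H] [InnerProductSpace ℂ H]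
    [CompleteSpace H] {A : H →L[ℂ] H} (hA : ∀ x, 0 ≤ ⟪A x, x⟫_ℂ) : IsSelfAdjoint A :=
  ((isPositive_iff_complex A).mpr fun x => by
    obtain ⟨hre, him⟩ := Complex.nonneg_iff.mp (hA x)
    exact ⟨Complex.ext rfl (by simpa using him), hre⟩).isSelfAdjoint

end ContinuousLinearMap

section ProperProducts

variable {H : Type*} [NormedAddCommGroup H] [InnerProductSpace ℂ H]

/-- The subspace `H_𝒮`. -/
def properConvergenceSubspace (T : ℕ → H →L[ℂ] H) (P : H →L[ℂ] H) : Submodule ℂ H where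
  carrier := {ξ | ∀ σ : ℕ → ℕ, (∀ k, (σ ⁻¹' {k}).Finite) →
    Tendsto (fun n => prodSeq T σ n ξ) atTop (𝓝 (P ξ))}
  add_mem' hξ hη σ hσ := by simpa only [map_add] using (hξ σ hσ).add (hη σ hσ)
  zero_mem' σ _ := by simpa only [map_zero] using tendsto_const_nhds
  smul_mem' c _ hξ σ hσ := by simpa only [map_smul] using (hξ σ hσ).const_smul c

theorem commute_prodSeq_s15 {T : ℕ → H →L[ℂ] H} {u : H →L[ℂ] H} (hu : ∀ n, Commute u (T n))
    (σ : ℕ → ℕ) : ∀ n, Commute u (prodSeq T σ n)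
  | 0 => hu (σ 0)
  | n + 1 => (hu (σ (n + 1))).mul_right (commute_prodSeq_s15 hu σ n)

theorem apply_mem_properConvergenceSubspace {T : ℕ → H →L[ℂ] H} {P u : H →L[ℂ] H}
    (hu : ∀ n, Commute u (T n)) (hPu : Commute P u) {ξ : H}
    (hξ : ξ ∈ properConvergenceSubspace T P) : u ξ ∈ properConvergenceSubspace T P := by
  intro σ hσ
  have h := (u.continuous.tendsto _).comp (hξ σ hσ)
  simpa only [Function.comp_def, ← mul_apply_eq_comp, (commute_prodSeq_s15 hu σ _).eq, hPu.eq]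
    using h

end ProperProducts

theorem equivalent_projection_below_generalized_paszkiewicz_general
    {H : Type*} [NormedAddCommGroup H] [InnerProductSpace ℂ H] [CompleteSpace H]
    (T : ℕ → H →L[ℂ] H)
    (hpos : ∀ n, ∀ ξ : H, 0 ≤ ⟪(T n) ξ, ξ⟫_ℂ)
    (Tlim : H →L[ℂ] H)
    (hTlim : ∀ ξ : H, Tendsto (fun n => (T n) ξ) atTop (𝓝 (Tlim ξ)))
    (P : H →L[ℂ] H)
    (hPmem : ∀ ξ : H, Tlim (P ξ) = P ξ)
    (hPorth : ∀ ξ η : H, Tlim η = η → ⟪ξ - P ξ, η⟫_ℂ = 0)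
    (HS : Set H)
    (hHS : HS = {ξ : H | ∀ σ : ℕ → ℕ, (∀ k, (σ ⁻¹' {k}).Finite) →
      Tendsto (fun n => prodSeq T σ n ξ) atTop (𝓝 (P ξ))})
    (e : H →L[ℂ] H)
    (heMem : ∀ ξ : H, e ξ ∈ HS)
    (heOrth : ∀ ξ : H, ∀ η ∈ HS, ⟪ξ - e ξ, η⟫_ℂ = 0)
    (u : H →L[ℂ] H)
    (huComm : ∀ n, u.comp (T n) = (T n).comp u)
    (huu : (ContinuousLinearMap.adjoint u).comp u = e) :
    ∀ ξ : H, (u.comp (ContinuousLinearMap.adjoint u)) ξ ∈ HS := by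
  obtain rfl : HS = properConvergenceSubspace T P := hHS
  have hu n : Commute u (T n) := huComm n
  have hu' n : Commute (star u) (T n) := by
    simpa only [(ContinuousLinearMap.isSelfAdjoint_of_inner_nonneg (hpos n)).star_eq]
      using (hu n).star_star
  have hPu : Commute P u := ContinuousLinearMap.commute_of_fixedPoints_projection hPmem hPorth
    (ContinuousLinearMap.commute_of_tendsto hTlim hu)
    (ContinuousLinearMap.commute_of_tendsto hTlim hu')
  replace huu : star u * u = e := huu
  have hue : u * e = u := huu ▸ CStarRing.mul_star_mul_self_of_isIdempotentElem
    (huu ▸ ContinuousLinearMap.isIdempotentElem_of_apply_mem_of_inner_sub_eq_zero heMem heOrth)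
  intro ξ
  rw [← hue]
  exact apply_mem_properConvergenceSubspace hu hPu (heMem _)

/-- If `e` is the orthogonal projection onto `H_𝒮` and `u` is a partial isometry commuting
with all `T n` with `u^* u = e`, then the range of `u u^*` is contained in `H_𝒮`. -/
theorem equivalent_projection_below_generalized_paszkiewicz
    {H : Type*} [NormedAddCommGroup H] [InnerProductSpace ℂ H] [CompleteSpace H]
    (T : ℕ → H →L[ℂ] H)
    (hpos : ∀ n, ∀ ξ : H, 0 ≤ ⟪(T n) ξ, ξ⟫_ℂ)
    (hcontr : ∀ n, ‖T n‖ ≤ 1)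
    (hdec : ∀ n, ∀ ξ : H, ⟪(T (n + 1)) ξ, ξ⟫_ℂ ≤ ⟪(T n) ξ, ξ⟫_ℂ)
    (Tlim : H →L[ℂ] H)
    (hTlim : ∀ ξ : H, Tendsto (fun n => (T n) ξ) atTop (𝓝 (Tlim ξ)))
    (P : H →L[ℂ] H)
    (hPmem : ∀ ξ : H, Tlim (P ξ) = P ξ)
    (hPorth : ∀ ξ η : H, Tlim η = η → ⟪ξ - P ξ, η⟫_ℂ = 0)
    (HS : Set H)
    (hHS : HS = {ξ : H | ∀ σ : ℕ → ℕ, (∀ k, (σ ⁻¹' {k}).Finite) →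
      Tendsto (fun n => prodSeq T σ n ξ) atTop (𝓝 (P ξ))})
    (e : H →L[ℂ] H)
    (heMem : ∀ ξ : H, e ξ ∈ HS)
    (heOrth : ∀ ξ : H, ∀ η ∈ HS, ⟪ξ - e ξ, η⟫_ℂ = 0)
    (u : H →L[ℂ] H)
    (huComm : ∀ n, u.comp (T n) = (T n).comp u)
    (huu : (ContinuousLinearMap.adjoint u).comp u = e) :
    ∀ ξ : H, (u.comp (ContinuousLinearMap.adjoint u)) ξ ∈ HS :=
  equivalent_projection_below_generalized_paszkiewicz_general T hpos Tlim hTlim P hPmem hPorth HS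
    hHS e heMem heOrth u huComm huu
end

section
/- Let H be a complex Hilbert space and let T_1 ≥ T_2 be positive linear contractions on H. For i ∈ {1, 2} let P_i denote the orthogonal projection onto {ξ ∈ H : T_i ξ = ξ}, and P_i^⊥ := I − P_i. Then for all i, j ∈ {1, 2}, T_i maps the range of P_j^⊥ into the range of P_{max(i,j)}^⊥; equivalently, if ξ is orthogonal to {η : T_j η = η}, then T_i ξ is orthogonal to {η : T_{max(i,j)} η = η}. -/
/-!
On a complex Hilbert space `0 ≤ ⟪T x, x⟫` forces `T` to be self-adjoint, so `T i η = η` gives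
`⟪T i ξ, η⟫ = ⟪ξ, η⟫`. It remains to see that a fixed point of `T (max i j)` is fixed by `T i` and
`T j`, i.e. that fixed points of `T 1` are fixed by `T 0`: if `T 1 η = η` then
`‖η‖² ≤ re ⟪T 0 η, η⟫` and `‖T 0 η‖ ≤ ‖η‖`, so expanding `‖T 0 η - η‖²` shows it vanishes.
-/

open scoped InnerProductSpace ComplexOrder

open RCLike in
theorem eq_of_norm_le_of_norm_sq_le_re_inner {𝕜 E : Type*} [RCLike 𝕜] [NormedAddCommGroup E]
    [InnerProductSpace 𝕜 E] {x y : E} (hnorm : ‖x‖ ≤ ‖y‖) (hinner : ‖y‖ ^ 2 ≤ re ⟪x, y⟫_𝕜) :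
    x = y := by
  have hsub : ‖x - y‖ ^ 2 = ‖x‖ ^ 2 - 2 * re ⟪x, y⟫_𝕜 + ‖y‖ ^ 2 := norm_sub_sq x y
  have hnonpos : ‖x - y‖ ^ 2 ≤ 0 := by nlinarith [norm_nonneg x]
  simpa [sub_eq_zero] using hnonpos

namespace ContinuousLinearMap

section RCLike

variable {𝕜 E : Type*} [RCLike 𝕜] [NormedAddCommGroup E] [InnerProductSpace 𝕜 E]

open RCLike in
theorem apply_eq_self_of_le_of_apply_eq_self {S T : E →L[𝕜] E} (hST : S ≤ T) (hT : ‖T‖ ≤ 1)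
    {x : E} (hx : S x = x) : T x = x := by
  refine eq_of_norm_le_of_norm_sq_le_re_inner (𝕜 := 𝕜) ?_ ?_
  · simpa using T.le_of_opNorm_le hT x
  · have h := ((le_def S T).1 hST).re_inner_nonneg_left x
    rwa [sub_apply, inner_sub_left, map_sub, hx, inner_self_eq_norm_sq, sub_nonneg] at h

end RCLike

section Complex

variable {E : Type*} [NormedAddCommGroup E] [InnerProductSpace ℂ E]

theorem isPositive_iff_inner_nonneg {T : E →L[ℂ] E} : T.IsPositive ↔ ∀ x, 0 ≤ ⟪T x, x⟫_ℂ := by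
  simp [isPositive_iff_complex, Complex.nonneg_iff, Complex.ext_iff, eq_comm, and_comm]

theorem le_iff_inner_le {S T : E →L[ℂ] E} : S ≤ T ↔ ∀ x, ⟪S x, x⟫_ℂ ≤ ⟪T x, x⟫_ℂ := by
  simp [le_def, isPositive_iff_inner_nonneg]

end Complex

end ContinuousLinearMap

theorem positive_contraction_maps_orthocomplement_general
    {H : Type*} [NormedAddCommGroup H] [InnerProductSpace ℂ H]
    (T : Fin 2 → H →L[ℂ] H)
    (hpos : ∀ i, ∀ ξ : H, 0 ≤ ⟪(T i) ξ, ξ⟫_ℂ)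
    (hcontr : ∀ i, ‖T i‖ ≤ 1)
    (hdec : ∀ ξ : H, ⟪(T 1) ξ, ξ⟫_ℂ ≤ ⟪(T 0) ξ, ξ⟫_ℂ) :
    ∀ i j : Fin 2, ∀ ξ : H,
      (∀ η : H, T j η = η → ⟪ξ, η⟫_ℂ = 0) →
      (∀ η : H, T (max i j) η = η → ⟪(T i) ξ, η⟫_ℂ = 0) := by
  have hanti : Antitone T :=
    Fin.antitone_iff_succ_le.2 (by simpa using ContinuousLinearMap.le_iff_inner_le.2 hdec)
  have hfix {k l : Fin 2} (hlk : l ≤ k) {η : H} (hη : T k η = η) : T l η = η :=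
    ContinuousLinearMap.apply_eq_self_of_le_of_apply_eq_self (hanti hlk) (hcontr l) hη
  have hT_pos (i : Fin 2) : (T i).IsPositive :=
    ContinuousLinearMap.isPositive_iff_inner_nonneg.2 (hpos i)
  intro i j ξ hξ η hη
  rw [(hT_pos i).inner_left_eq_inner_right, hfix (le_max_left i j) hη]
  exact hξ η (hfix (le_max_right i j) hη)

/-- For positive contractions `T 0 ≥ T 1`, the operator `T i` maps the orthogonal complement
of the fixed-point set of `T j` into the orthogonal complement of the fixed-point set of
`T (max i j)`. -/
theorem positive_contraction_maps_orthocomplement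
    {H : Type*} [NormedAddCommGroup H] [InnerProductSpace ℂ H] [CompleteSpace H]
    (T : Fin 2 → H →L[ℂ] H)
    (hpos : ∀ i, ∀ ξ : H, 0 ≤ ⟪(T i) ξ, ξ⟫_ℂ)
    (hcontr : ∀ i, ‖T i‖ ≤ 1)
    (hdec : ∀ ξ : H, ⟪(T 1) ξ, ξ⟫_ℂ ≤ ⟪(T 0) ξ, ξ⟫_ℂ) :
    ∀ i j : Fin 2, ∀ ξ : H,
      (∀ η : H, T j η = η → ⟪ξ, η⟫_ℂ = 0) →
      (∀ η : H, T (max i j) η = η → ⟪(T i) ξ, η⟫_ℂ = 0) :=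
  positive_contraction_maps_orthocomplement_general T hpos hcontr hdec
end

section
/- Let H be a complex Hilbert space, T_1 ≥ T_2 ≥ ⋯ a decreasing sequence of positive linear contractions on H, T the strong operator limit of (T_n), and P the orthogonal projection onto {ξ ∈ H : Tξ = ξ}. Assume ‖T_n − T‖ → 0 and that 1 is isolated in the spectrum of T, i.e., there exists δ ∈ (0, 1) such that the spectrum of T does not intersect the open interval (1−δ, 1). Then for every proper σ : ℕ → ℕ, ‖T_{σ(n)} ⋯ T_{σ(1)} − P‖ → 0 in operator norm. -/
open Filter Topology
open scoped InnerProductSpace ComplexOrder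

noncomputable def ramp (c x : ℝ) : ℝ := max 0 (min 1 ((x - c) / (1 - c)))

lemma continuous_ramp (c : ℝ) : Continuous (ramp c) := by
  unfold ramp; fun_prop

lemma ramp_of_le {c x : ℝ} (hc : c < 1) (hx : x ≤ c) : ramp c x = 0 :=
  max_eq_left <| (min_le_right _ _).trans <|
    div_nonpos_of_nonpos_of_nonneg (by linarith) (by linarith)

lemma ramp_one {c : ℝ} (hc : c < 1) : ramp c 1 = 1 := by
  simp [ramp, div_self (sub_ne_zero.mpr hc.ne')]

section CStarAlgebra

variable {A : Type*} [CStarAlgebra A]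

/-- The factorisation `1 - e = b * (1 - a)` is what shows that `e` fixes every fixed vector
of `a`. -/
theorem IsSelfAdjoint.exists_isStarProjection_norm_sub_le {a : A} (ha : IsSelfAdjoint a)
    {c : ℝ} (hc₀ : 0 ≤ c) (hc₁ : c < 1) (hspec : spectrum ℝ a ⊆ Set.Icc (-c) c ∪ {1}) :
    ∃ e b : A, IsStarProjection e ∧ a * e = e ∧ 1 - e = b * (1 - a) ∧ ‖a - e‖ ≤ c := by
  have hf := continuous_ramp c
  have hspec' : ∀ x ∈ spectrum ℝ a, (x ∈ Set.Icc (-c) c ∧ ramp c x = 0) ∨ x = 1 :=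
    fun x hx => (hspec hx).imp (fun h => ⟨h, ramp_of_le hc₁ h.2⟩) id
  -- `g x = 1 / (1 - x)` on `[-c, c]` and `g 1 = 0`; the `max` only makes `g` continuous on `ℝ`.
  set g : ℝ → ℝ := fun x => (1 - ramp c x) / max (1 - c) (1 - x)
  have hg : Continuous g :=
    (continuous_const.sub hf).div (by fun_prop) fun x => by
      have := le_max_left (1 - c) (1 - x); positivity
  refine ⟨cfc (ramp c) a, cfc g a, ⟨?_, cfc_predicate _ _⟩, ?_, ?_, ?_⟩
  · rw [IsIdempotentElem, ← cfc_mul ..]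
    refine cfc_congr fun x hx => ?_
    rcases hspec' x hx with ⟨-, h⟩ | rfl <;> simp [*, ramp_one hc₁]
  · calc a * cfc (ramp c) a = cfc (fun x => x * ramp c x) a := by
          rw [cfc_mul (fun x => x) _ a, cfc_id' ℝ a]
      _ = cfc (ramp c) a := cfc_congr fun x hx => by
          rcases hspec' x hx with ⟨-, h⟩ | rfl <;> simp [*]
  · calc 1 - cfc (ramp c) a = cfc (fun x => 1 - ramp c x) a := by
          rw [cfc_sub (fun _ => 1) _ a, cfc_const_one ℝ a]
      _ = cfc (fun x => g x * (1 - x)) a := cfc_congr fun x hx => by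
          rcases hspec' x hx with ⟨hx, h⟩ | rfl
          · have : 0 < 1 - x := by linarith [hx.2]
            simp only [g, h, max_eq_right (by linarith [hx.2] : 1 - c ≤ 1 - x)]
            field_simp
          · simp [ramp_one hc₁]
      _ = cfc g a * (1 - a) := by
          rw [cfc_mul g (fun x => 1 - x) a, cfc_sub (fun _ => 1) (fun x => x) a,
            cfc_const_one ℝ a, cfc_id' ℝ a]
  · calc ‖a - cfc (ramp c) a‖ = ‖cfc (fun x => x - ramp c x) a‖ := by
          rw [cfc_sub (fun x => x) _ a, cfc_id' ℝ a]
      _ ≤ c := norm_cfc_le hc₀ fun x hx => by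
          rcases hspec' x hx with ⟨hx, h⟩ | rfl
          · simpa [h, abs_le] using hx
          · simp [ramp_one hc₁, hc₀]

end CStarAlgebra

section Operators

variable {H : Type*} [NormedAddCommGroup H] [InnerProductSpace ℂ H]

namespace ContinuousLinearMap

lemma nonneg_iff_forall_inner_nonneg (S : H →L[ℂ] H) :
    0 ≤ S ↔ ∀ ξ, 0 ≤ ⟪S ξ, ξ⟫_ℂ := by
  rw [nonneg_iff_isPositive, isPositive_iff_complex]
  refine forall_congr' fun ξ => ?_
  rw [Complex.nonneg_iff, Complex.ext_iff]
  simp only [Complex.ofReal_re, Complex.ofReal_im]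
  exact ⟨fun ⟨⟨_, him⟩, hre⟩ => ⟨hre, him⟩, fun ⟨hre, him⟩ => ⟨⟨rfl, him⟩, hre⟩⟩

lemma le_iff_forall_inner_le [CompleteSpace H] (S R : H →L[ℂ] H) :
    S ≤ R ↔ ∀ ξ, ⟪S ξ, ξ⟫_ℂ ≤ ⟪R ξ, ξ⟫_ℂ := by
  rw [← sub_nonneg, nonneg_iff_forall_inner_nonneg]
  simp only [sub_apply, inner_sub_left, sub_nonneg]

lemma apply_eq_zero_of_inner_eq_zero [CompleteSpace H] {S : H →L[ℂ] H} (hS : 0 ≤ S) {ξ : H}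
    (h : ⟪S ξ, ξ⟫_ℂ = 0) : S ξ = 0 := by
  obtain ⟨b, rfl⟩ := CStarAlgebra.nonneg_iff_eq_star_mul_self.mp hS
  have : ‖b ξ‖ ^ 2 = 0 := by
    rw [apply_norm_sq_eq_inner_adjoint_left, ← star_eq_adjoint, ← mul_def, h, map_zero]
  rw [mul_apply_eq_comp, norm_eq_zero.mp (pow_eq_zero_iff two_ne_zero |>.mp this), map_zero]

lemma apply_eq_self_of_le_of_le_one [CompleteSpace H] {A S : H →L[ℂ] H} (hAS : A ≤ S)
    (hS : S ≤ 1) {ξ : H} (hξ : A ξ = ξ) : S ξ = ξ := by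
  have hA : (1 - A) ξ = 0 := by simp [hξ]
  have hle := (le_iff_forall_inner_le _ _).1 (sub_le_sub_left hAS 1) ξ
  rw [hA, inner_zero_left] at hle
  have h₀ := (nonneg_iff_forall_inner_nonneg _).1 (sub_nonneg.2 hS) ξ
  have := apply_eq_zero_of_inner_eq_zero (sub_nonneg.2 hS) (le_antisymm hle h₀)
  rw [sub_apply, one_apply_eq_self, sub_eq_zero] at this
  exact this.symm

end ContinuousLinearMap

end Operators

theorem IsStarProjection.eq_starProjection_ker_sub_one {𝕜 E : Type*} [RCLike 𝕜]
    [NormedAddCommGroup E] [InnerProductSpace 𝕜 E] [CompleteSpace E] {A e b : E →L[𝕜] E}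
    (he : IsStarProjection e) (hAe : A * e = e) (hb : 1 - e = b * (1 - A)) :
    e = (A - 1 : E →L[𝕜] E).ker.starProjection := by
  refine ContinuousLinearMap.IsStarProjection.ext he isStarProjection_starProjection ?_
  rw [Submodule.range_starProjection]
  ext ξ
  simp only [LinearMap.mem_range, ContinuousLinearMap.coe_coe, LinearMap.mem_ker,
    sub_apply, one_apply_eq_self, sub_eq_zero]
  constructor
  · rintro ⟨η, rfl⟩
    rw [← mul_apply_eq_comp, hAe]
  · intro hξ
    refine ⟨ξ, ?_⟩
    have := congr($hb ξ)
    rwa [mul_apply_eq_comp, sub_apply, sub_apply, one_apply_eq_self, hξ,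
      sub_self, map_zero, sub_eq_zero, eq_comm] at this

section ProdSeq

variable {H : Type*} [NormedAddCommGroup H] [InnerProductSpace ℂ H]

lemma mul_prodSeq_of_forall_mul_eq {T : ℕ → H →L[ℂ] H} {P : H →L[ℂ] H} (hPT : ∀ k, P * T k = P)
    (σ : ℕ → ℕ) (n : ℕ) : P * prodSeq T σ n = P := by
  induction n with
  | zero => exact hPT (σ 0)
  | succ n ih => rw [prodSeq, ← ContinuousLinearMap.mul_def, ← mul_assoc, hPT, ih]

lemma prodSeq_sub_eq_prodSeq_sub {T : ℕ → H →L[ℂ] H} {P : H →L[ℂ] H} (hP : IsIdempotentElem P)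
    (hTP : ∀ k, T k * P = P) (hPT : ∀ k, P * T k = P) (σ : ℕ → ℕ) (n : ℕ) :
    prodSeq T σ n - P = prodSeq (fun k => T k - P) σ n := by
  induction n with
  | zero => rfl
  | succ n ih =>
    rw [prodSeq, prodSeq, ← ih, ← ContinuousLinearMap.mul_def, ← ContinuousLinearMap.mul_def,
      sub_mul, mul_sub, mul_sub, hTP, mul_prodSeq_of_forall_mul_eq hPT, hP.eq]
    abel

lemma tendsto_prodSeq_zero [CompleteSpace H] {S : ℕ → H →L[ℂ] H} {σ : ℕ → ℕ}
    (hσ : Tendsto σ atTop atTop) {c : ℝ} (hc : c < 1) (hS : ∀ᶠ k in atTop, ‖S k‖ ≤ c) :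
    Tendsto (prodSeq S σ) atTop (𝓝 0) := by
  refine (summable_of_ratio_norm_eventually_le hc ?_).tendsto_atTop_zero
  filter_upwards [(hσ.comp (tendsto_add_atTop_nat 1)).eventually hS] with n hn
  exact (ContinuousLinearMap.opNorm_comp_le _ _).trans
    (mul_le_mul_of_nonneg_right hn (norm_nonneg _))

end ProdSeq

theorem generalized_paszkiewicz_norm_convergence_general
    {H : Type*} [NormedAddCommGroup H] [InnerProductSpace ℂ H] [CompleteSpace H]
    (T : ℕ → H →L[ℂ] H)
    (hpos : ∀ n, ∀ ξ : H, 0 ≤ ⟪(T n) ξ, ξ⟫_ℂ)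
    (hcontr : ∀ n, ‖T n‖ ≤ 1)
    (hdec : ∀ n, ∀ ξ : H, ⟪(T (n + 1)) ξ, ξ⟫_ℂ ≤ ⟪(T n) ξ, ξ⟫_ℂ)
    (Tlim : H →L[ℂ] H)
    (P : H →L[ℂ] H)
    (hPmem : ∀ ξ : H, Tlim (P ξ) = P ξ)
    (hPorth : ∀ ξ η : H, Tlim η = η → ⟪ξ - P ξ, η⟫_ℂ = 0)
    (hnorm : Tendsto (fun n => ‖T n - Tlim‖) atTop (𝓝 0))
    (hgap : ∃ δ ∈ Set.Ioo (0 : ℝ) 1,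
      ∀ x : ℝ, x ∈ Set.Ioo (1 - δ) 1 → (x : ℂ) ∉ spectrum ℂ Tlim) :
    ∀ σ : ℕ → ℕ, (∀ k, (σ ⁻¹' {k}).Finite) →
      Tendsto (fun n => ‖prodSeq T σ n - P‖) atTop (𝓝 0) := by
  intro σ hσ
  obtain ⟨δ, ⟨hδ₀, hδ₁⟩, hgap⟩ := hgap
  have hT₀ : ∀ n, 0 ≤ T n := fun n =>
    (ContinuousLinearMap.nonneg_iff_forall_inner_nonneg _).2 (hpos n)
  have hT₁ : ∀ n, T n ≤ 1 := fun n =>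
    (CStarAlgebra.norm_le_one_iff_of_nonneg _ (hT₀ n)).1 (hcontr n)
  have hlim : Tendsto T atTop (𝓝 Tlim) := tendsto_iff_norm_sub_tendsto_zero.2 hnorm
  have hanti : Antitone T := antitone_nat_of_succ_le fun n =>
    (ContinuousLinearMap.le_iff_forall_inner_le _ _).2 (hdec n)
  have hTlim_le : ∀ n, Tlim ≤ T n := hanti.le_of_tendsto hlim
  have hTlim₀ : 0 ≤ Tlim := ge_of_tendsto' hlim hT₀
  have hspec : spectrum ℝ Tlim ⊆ Set.Icc (-(1 - δ)) (1 - δ) ∪ {1} := by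
    intro x hx
    have hx₀ : 0 ≤ x := spectrum_nonneg_of_nonneg hTlim₀ hx
    have hx₁ : x ≤ 1 := (CFC.le_one_iff Tlim).1 ((hTlim_le 0).trans (hT₁ 0)) x hx
    rcases eq_or_lt_of_le hx₁ with rfl | hx₁
    · exact Or.inr rfl
    · refine Or.inl ⟨by linarith, not_lt.1 fun hx₂ => hgap x ⟨hx₂, hx₁⟩ ?_⟩
      simpa using spectrum.algebraMap_mem ℂ hx
  obtain ⟨e, b, he, hTe, hb, hnorm_e⟩ :=
    hTlim₀.isSelfAdjoint.exists_isStarProjection_norm_sub_le (by linarith) (by linarith) hspec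
  have hPe : P = e := by
    rw [he.eq_starProjection_ker_sub_one hTe hb]
    ext ξ
    refine (Submodule.eq_starProjection_of_mem_of_inner_eq_zero ?_ fun η hη => hPorth ξ η ?_).symm
    · simpa [sub_eq_zero] using hPmem ξ
    · simpa [sub_eq_zero] using hη
  subst hPe
  have hTP : ∀ n, T n * P = P := fun n => ContinuousLinearMap.ext fun ξ =>
    ContinuousLinearMap.apply_eq_self_of_le_of_le_one (hTlim_le n) (hT₁ n) (hPmem ξ)
  have hPT : ∀ n, P * T n = P := fun n => by
    simpa [he.isSelfAdjoint.star_eq, (hT₀ n).isSelfAdjoint.star_eq] using congr(star $(hTP n))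
  have hσ' : Tendsto σ atTop atTop := by
    simpa only [Nat.cofinite_eq_atTop] using
      Tendsto.cofinite_of_finite_preimage_singleton fun k => (hσ k).to_subtype
  have hfac : ∀ᶠ k in atTop, ‖T k - P‖ ≤ 1 - δ / 2 :=
    ((hlim.sub_const P).norm.eventually (gt_mem_nhds (by linarith))).mono fun _ => le_of_lt
  simp_rw [prodSeq_sub_eq_prodSeq_sub he.isIdempotentElem hTP hPT]
  exact tendsto_zero_iff_norm_tendsto_zero.1 (tendsto_prodSeq_zero hσ' (by linarith) hfac)

/-- If `‖T n - Tlim‖ → 0` and `1` is isolated in the spectrum of `Tlim`, then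
`‖S_n^σ - P‖ → 0` in operator norm for every proper `σ`. -/
theorem generalized_paszkiewicz_norm_convergence
    {H : Type*} [NormedAddCommGroup H] [InnerProductSpace ℂ H] [CompleteSpace H]
    (T : ℕ → H →L[ℂ] H)
    (hpos : ∀ n, ∀ ξ : H, 0 ≤ ⟪(T n) ξ, ξ⟫_ℂ)
    (hcontr : ∀ n, ‖T n‖ ≤ 1)
    (hdec : ∀ n, ∀ ξ : H, ⟪(T (n + 1)) ξ, ξ⟫_ℂ ≤ ⟪(T n) ξ, ξ⟫_ℂ)
    (Tlim : H →L[ℂ] H)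
    (hTlim : ∀ ξ : H, Tendsto (fun n => (T n) ξ) atTop (𝓝 (Tlim ξ)))
    (P : H →L[ℂ] H)
    (hPmem : ∀ ξ : H, Tlim (P ξ) = P ξ)
    (hPorth : ∀ ξ η : H, Tlim η = η → ⟪ξ - P ξ, η⟫_ℂ = 0)
    (hnorm : Tendsto (fun n => ‖T n - Tlim‖) atTop (𝓝 0))
    (hgap : ∃ δ ∈ Set.Ioo (0 : ℝ) 1,
      ∀ x : ℝ, x ∈ Set.Ioo (1 - δ) 1 → (x : ℂ) ∉ spectrum ℂ Tlim) :
    ∀ σ : ℕ → ℕ, (∀ k, (σ ⁻¹' {k}).Finite) →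
      Tendsto (fun n => ‖prodSeq T σ n - P‖) atTop (𝓝 0) :=
  generalized_paszkiewicz_norm_convergence_general T hpos hcontr hdec Tlim P hPmem hPorth hnorm hgap
end
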